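/- arXiv:2012.06682 — 10 statements merged into one kernel-verified Lean document; each statement's English description precedes it below -/
import Mathlib

section
/- Let f: [0,1] → ℝ≥0 be integrable, v(x,y) = ∫ₓʸ f, n ≥ 2, s ∈ (0, 1/(n-1)). Define Π as the set of tuples (x₁,…,x_{n-1}) with 0 ≤ x₁, x_i + s ≤ x_{i+1} for all i, and x_{n-1} + s ≤ 1 (representing an s-separated partition into pieces [0,x₁], [x₁+s, x₂], …, [x_{n-1}+s, 1], possibly with additional slack allowed in a general definition). Then the supremum of min-values over all s-separated partitions (where consecutive pieces are separated by length at least s, the first piece may start after 0, and the last piece may end before 1) equals the maximum of min-values over s-separated partitions in which consecutive pieces are separated by length exactly s, the first piece starts at 0, and the last piece ends at 1. -/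
/-!
Exactly `s`-separated partitions are parametrized by the right endpoints of their first `n - 1`
pieces. These range over a compact set, on which the min-value is continuous because the
primitive of `f` is, so it attains a maximum there. Every `s`-separated partition is dominated
by the exact partition with the same right endpoints: its pieces contain the original ones and
`f ≥ 0`.
-/

open MeasureTheory

noncomputable def cakeVal (f : ℝ → ℝ) (x y : ℝ) : ℝ := ∫ t in x..y, f t

/-- An `s`-separated partition of `[0,1]` into `n` intervals `[a j, b j]`:
the first piece may start after `0`, consecutive pieces are separated by at least `s`,
and the last piece may end before `1`. -/
def isSepPartition (n : ℕ) (s : ℝ) (a b : ℕ → ℝ) : Prop :=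
  0 ≤ a 0 ∧ (∀ j, j < n → a j ≤ b j) ∧ (∀ j, j + 1 < n → b j + s ≤ a (j + 1)) ∧ b (n - 1) ≤ 1

/-- An exactly `s`-separated partition: first piece starts at `0`, consecutive pieces are
separated by exactly `s`, last piece ends at `1`. -/
def isExactSepPartition (n : ℕ) (s : ℝ) (a b : ℕ → ℝ) : Prop :=
  a 0 = 0 ∧ (∀ j, j < n → a j ≤ b j) ∧ (∀ j, j + 1 < n → b j + s = a (j + 1)) ∧ b (n - 1) = 1

/-- The min-value of a partition. -/
noncomputable def minValue (f : ℝ → ℝ) (n : ℕ) (a b : ℕ → ℝ) : ℝ :=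
  ⨅ j : Fin n, cakeVal f (a (j : ℕ)) (b (j : ℕ))

section

variable {n : ℕ} {s : ℝ} {a b : ℕ → ℝ}

theorem isSepPartition.nonneg_left (h : isSepPartition n s a b) (hs : 0 ≤ s) :
    ∀ j < n, 0 ≤ a j := by
  obtain ⟨h0, hab, hgap, -⟩ := h
  intro j hj
  induction j with
  | zero => exact h0
  | succ j ih => linarith [ih (by omega), hab j (by omega), hgap j hj]

theorem isSepPartition.right_le_one (h : isSepPartition n s a b) (hs : 0 ≤ s) :
    ∀ j < n, b j ≤ 1 := by
  obtain ⟨-, hab, hgap, h1⟩ := h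
  intro j hj
  induction (Nat.le_sub_one_of_lt hj) using Nat.decreasingInduction with
  | self => exact h1
  | of_succ k hk ih => linarith [ih (by omega), hab (k + 1) (by omega), hgap k (by omega)]

theorem isSepPartition.uIcc_subset (h : isSepPartition n s a b) (hs : 0 ≤ s) {j : ℕ}
    (hj : j < n) : Set.uIcc (a j) (b j) ⊆ Set.uIcc 0 1 := by
  rw [Set.uIcc_of_le (h.2.1 j hj), Set.uIcc_of_le zero_le_one]
  exact Set.Icc_subset_Icc (h.nonneg_left hs j hj) (h.right_le_one hs j hj)

theorem isExactSepPartition.isSepPartition (h : isExactSepPartition n s a b) :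
    isSepPartition n s a b := by
  obtain ⟨h0, hab, hgap, h1⟩ := h
  exact ⟨h0.ge, hab, fun j hj => (hgap j hj).le, h1.le⟩

/-- An exactly `s`-separated partition is encoded by the right endpoints `c` of its first
`n - 1` pieces. -/
def exactRight (n : ℕ) (c : Fin (n - 1) → ℝ) (j : ℕ) : ℝ :=
  if h : j < n - 1 then c ⟨j, h⟩ else 1

def exactLeft (n : ℕ) (s : ℝ) (c : Fin (n - 1) → ℝ) : ℕ → ℝ
  | 0 => 0
  | j + 1 => exactRight n c j + s

def exactCuts (n : ℕ) (s : ℝ) : Set (Fin (n - 1) → ℝ) :=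
  {c | isExactSepPartition n s (exactLeft n s c) (exactRight n c)}

theorem mem_exactCuts_iff {c : Fin (n - 1) → ℝ} :
    c ∈ exactCuts n s ↔ ∀ j : Fin n, exactLeft n s c j ≤ exactRight n c j := by
  refine ⟨fun h j => h.2.1 j j.isLt, fun h => ⟨rfl, fun j hj => h ⟨j, hj⟩, fun j _ => rfl, ?_⟩⟩
  simp [exactRight]

theorem continuous_exactRight (j : ℕ) :
    Continuous fun c : Fin (n - 1) → ℝ => exactRight n c j := by
  unfold exactRight
  split_ifs
  · exact continuous_apply _
  · exact continuous_const

theorem continuous_exactLeft (j : ℕ) :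
    Continuous fun c : Fin (n - 1) → ℝ => exactLeft n s c j := by
  cases j with
  | zero => exact continuous_const
  | succ j => exact (continuous_exactRight j).add continuous_const

theorem isClosed_exactCuts : IsClosed (exactCuts n s) := by
  have : exactCuts n s = ⋂ j : Fin n, {c | exactLeft n s c j ≤ exactRight n c j} := by
    ext; simp [mem_exactCuts_iff]
  rw [this]
  exact isClosed_iInter fun j => isClosed_le (continuous_exactLeft j) (continuous_exactRight j)

theorem exactCuts_subset_Icc (hs : 0 ≤ s) : exactCuts n s ⊆ Set.Icc 0 1 := by
  intro c hc
  have hc01 (i : Fin (n - 1)) : c i ∈ Set.Icc 0 1 := by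
    have := hc.isSepPartition.uIcc_subset hs (Nat.lt_of_lt_pred i.isLt) Set.right_mem_uIcc
    rwa [Set.uIcc_of_le zero_le_one, exactRight, dif_pos i.isLt] at this
  exact ⟨fun i => (hc01 i).1, fun i => (hc01 i).2⟩

theorem isCompact_exactCuts (hs : 0 ≤ s) : IsCompact (exactCuts n s) :=
  isCompact_Icc.of_isClosed_subset isClosed_exactCuts (exactCuts_subset_Icc hs)

/-- Cutting at `0, s, 2s, …, (n-2)s` leaves single points as the first `n-1` pieces. -/
theorem exactCuts_nonempty (hs : 0 ≤ s) (hns : ((n : ℝ) - 1) * s ≤ 1) :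
    (exactCuts n s).Nonempty := by
  refine ⟨fun i => i * s, mem_exactCuts_iff.2 fun ⟨j, hj⟩ => ?_⟩
  cases j with
  | zero => simp only [exactLeft, exactRight]; split_ifs <;> positivity
  | succ j =>
    simp only [exactLeft, exactRight]
    split_ifs with h₁ h₂ <;> try omega
    · push_cast; linarith
    · have hn : (n : ℝ) = j + 2 := by norm_cast; omega
      linarith [show ((n : ℝ) - 1) * s = j * s + s by rw [hn]; ring]

/-- Keeping the right endpoints of the first `n - 1` pieces and closing every gap to exactly `s`
only enlarges the pieces. -/
theorem isSepPartition.exists_exactCuts_extension (h : isSepPartition n s a b) (hs : 0 ≤ s) :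
    ∃ c ∈ exactCuts n s, ∀ j < n, exactLeft n s c j ≤ a j ∧ b j ≤ exactRight n c j := by
  set c : Fin (n - 1) → ℝ := fun i => b i
  have hext : ∀ j < n, exactLeft n s c j ≤ a j ∧ b j ≤ exactRight n c j := by
    intro j hj
    constructor
    · cases j with
      | zero => exact h.1
      | succ j =>
        simp only [exactLeft, exactRight, dif_pos (show j < n - 1 by omega)]
        exact h.2.2.1 j hj
    · unfold exactRight
      split_ifs
      · exact le_rfl
      · exact h.right_le_one hs j hj
  refine ⟨c, mem_exactCuts_iff.2 fun j => ?_, hext⟩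
  exact (hext j j.isLt).1.trans ((h.2.1 j j.isLt).trans (hext j j.isLt).2)

theorem minValue_mono {f : ℝ → ℝ} {a' b' : ℕ → ℝ} (hf : ∀ t, 0 ≤ f t)
    (hfi : ∀ j < n, IntervalIntegrable f volume (a j) (b j))
    (h : ∀ j < n, a j ≤ a' j ∧ a' j ≤ b' j ∧ b' j ≤ b j) :
    minValue f n a' b' ≤ minValue f n a b :=
  ciInf_mono (Set.finite_range _).bddBelow fun j => by
    obtain ⟨h₁, h₂, h₃⟩ := h j j.isLt
    exact intervalIntegral.integral_mono_interval h₁ h₂ h₃ (ae_of_all _ hf) (hfi j j.isLt)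

theorem isSepPartition.exists_exactCuts_minValue_le {f : ℝ → ℝ} (h : isSepPartition n s a b)
    (hs : 0 ≤ s) (hf : ∀ t, 0 ≤ f t) (hfi : IntervalIntegrable f volume 0 1) :
    ∃ c ∈ exactCuts n s, minValue f n a b ≤ minValue f n (exactLeft n s c) (exactRight n c) := by
  obtain ⟨c, hc, hext⟩ := h.exists_exactCuts_extension hs
  refine ⟨c, hc, minValue_mono hf (fun j hj => ?_) fun j hj => ?_⟩
  · exact hfi.mono_set (hc.isSepPartition.uIcc_subset hs hj)
  · exact ⟨(hext j hj).1, h.2.1 j hj, (hext j hj).2⟩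

theorem continuousOn_cakeVal {f : ℝ → ℝ} {u v : ℝ} (hfi : IntervalIntegrable f volume u v) :
    ContinuousOn (fun p : ℝ × ℝ => cakeVal f p.1 p.2) (Set.uIcc u v ×ˢ Set.uIcc u v) := by
  have hF := intervalIntegral.continuousOn_primitive_interval' hfi Set.left_mem_uIcc
  refine ((hF.comp continuousOn_snd fun p hp => hp.2).sub
    (hF.comp continuousOn_fst fun p hp => hp.1)).congr fun p hp => ?_
  have hint : ∀ x ∈ Set.uIcc u v, IntervalIntegrable f volume u x := fun x hx =>
    hfi.mono_set (Set.uIcc_subset_uIcc Set.left_mem_uIcc hx)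
  exact (intervalIntegral.integral_interval_sub_left (hint _ hp.2) (hint _ hp.1)).symm

theorem ContinuousOn.ciInf_apply {X ι : Type*} [TopologicalSpace X] [Fintype ι]
    {g : ι → X → ℝ} {t : Set X} (hg : ∀ i, ContinuousOn (g i) t) :
    ContinuousOn (fun x => ⨅ i, g i x) t := by
  cases isEmpty_or_nonempty ι
  · simpa only [Real.iInf_of_isEmpty] using continuousOn_const
  · simpa only [← Finset.inf'_univ_eq_ciInf] using
      ContinuousOn.finset_inf'_apply Finset.univ_nonempty fun i _ => hg i

theorem continuousOn_minValue_exactCuts {f : ℝ → ℝ} (hs : 0 ≤ s)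
    (hfi : IntervalIntegrable f volume 0 1) :
    ContinuousOn (fun c => minValue f n (exactLeft n s c) (exactRight n c)) (exactCuts n s) :=
  ContinuousOn.ciInf_apply fun j => (continuousOn_cakeVal hfi).comp
    ((continuous_exactLeft j).prodMk (continuous_exactRight j)).continuousOn fun _ hc =>
      have hpiece := hc.isSepPartition.uIcc_subset hs j.isLt
      ⟨hpiece Set.left_mem_uIcc, hpiece Set.right_mem_uIcc⟩

end

theorem stmt_2_general (n : ℕ) (s : ℝ) (hs : 0 < s) (hs' : s < 1 / ((n : ℝ) - 1))
    (f : ℝ → ℝ) (hf0 : ∀ t, 0 ≤ f t)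
    (hfi : IntervalIntegrable f volume 0 1) :
    ∃ a b : ℕ → ℝ, isExactSepPartition n s a b ∧
      (∀ a' b' : ℕ → ℝ, isSepPartition n s a' b' → minValue f n a' b' ≤ minValue f n a b) ∧
      minValue f n a b =
        sSup {m | ∃ a' b' : ℕ → ℝ, isSepPartition n s a' b' ∧ m = minValue f n a' b'} := by
  have hns : ((n : ℝ) - 1) * s ≤ 1 := by
    rcases le_or_gt ((n : ℝ) - 1) 0 with hn | hn
    · nlinarith
    · exact ((lt_div_iff₀' hn).mp hs').le
  obtain ⟨c₀, hc₀, hmax⟩ := (isCompact_exactCuts hs.le).exists_isMaxOn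
    (exactCuts_nonempty hs.le hns) (continuousOn_minValue_exactCuts hs.le hfi)
  have hgreatest : IsGreatest {m | ∃ a' b' : ℕ → ℝ, isSepPartition n s a' b' ∧
      m = minValue f n a' b'} (minValue f n (exactLeft n s c₀) (exactRight n c₀)) := by
    refine ⟨⟨_, _, hc₀.isSepPartition, rfl⟩, ?_⟩
    rintro _ ⟨a', b', hp, rfl⟩
    obtain ⟨c, hc, hle⟩ := hp.exists_exactCuts_minValue_le hs.le hf0 hfi
    exact hle.trans (hmax hc)
  exact ⟨_, _, hc₀, fun a' b' hp => hgreatest.2 ⟨a', b', hp, rfl⟩, hgreatest.csSup_eq.symm⟩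

/-- The supremum of min-values over all `s`-separated partitions is attained at an exactly
`s`-separated partition. -/
theorem stmt_2 (n : ℕ) (hn : 2 ≤ n) (s : ℝ) (hs : 0 < s) (hs' : s < 1 / ((n : ℝ) - 1))
    (f : ℝ → ℝ) (hf0 : ∀ t, 0 ≤ f t)
    (hfi : IntervalIntegrable f volume 0 1) :
    ∃ a b : ℕ → ℝ, isExactSepPartition n s a b ∧
      (∀ a' b' : ℕ → ℝ, isSepPartition n s a' b' → minValue f n a' b' ≤ minValue f n a b) ∧
      minValue f n a b =
        sSup {m | ∃ a' b' : ℕ → ℝ, isSepPartition n s a' b' ∧ m = minValue f n a' b'} :=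
  stmt_2_general n s hs hs' f hf0 hfi
end

section
/- Let n ≥ 2 agents have nonnegative integrable density functions f₁,…,fₙ on [0,1] with ∫₀¹ f_i = 1, and let s ∈ (0, 1/(n-1)). Then there exists an s-separated connected allocation (A₁,…,Aₙ) of the cake [0,1] such that v_i(A_i) ≥ MMS_i for every agent i, where MMS_i is agent i's maximin share with separation s. -/
open MeasureTheory

/-- The maximin share of the valuation with density `f` for `n` agents and separation `s`. -/
noncomputable def MMScake (f : ℝ → ℝ) (n : ℕ) (s : ℝ) : ℝ :=
  sSup {m | ∃ a b : ℕ → ℝ, isSepPartition n s a b ∧ m = minValue f n a b}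

namespace Stmt3Aux

variable {s : ℝ}

lemma lowA (hs : 0 < s) {k : ℕ} {c : ℝ} {a b : ℕ → ℝ}
    (h0 : c ≤ a 0) (h1 : ∀ j, j < k → a j ≤ b j)
    (h2 : ∀ j, j + 1 < k → b j + s ≤ a (j + 1)) :
    ∀ j, j < k → c ≤ a j := by
  intro j
  induction j with
  | zero => intro _; exact h0
  | succ m ih =>
    intro hm
    have hm' : m < k := by omega
    have hab := h1 m hm'
    have hg := h2 m hm
    have hc := ih hm'
    linarith

lemma chainB (hs : 0 < s) {k : ℕ} {a b : ℕ → ℝ}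
    (h1 : ∀ j, j < k → a j ≤ b j) (h2 : ∀ j, j + 1 < k → b j + s ≤ a (j + 1)) :
    ∀ j2, j2 < k → ∀ j1, j1 ≤ j2 → b j1 ≤ b j2 := by
  intro j2
  induction j2 with
  | zero =>
    intro _ j1 hj1
    have : j1 = 0 := by omega
    simp [this]
  | succ m ih =>
    intro hm j1 hj1
    rcases Nat.lt_or_ge j1 (m + 1) with h | h
    · have h1' := ih (by omega) j1 (by omega)
      have hg := h2 m hm
      have hab := h1 (m + 1) hm
      linarith
    · have : j1 = m + 1 := by omega
      simp [this]

/-- The moving-knife allocation lemma: if each agent in `T` (with `T.card = k`) has her own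
family of `k` pairwise `s`-separated intervals inside `[c, 1]`, then we can give each agent
one of her own intervals so that the chosen intervals are pairwise `s`-separated. -/
lemma alloc (n : ℕ) (hs : 0 < s) :
    ∀ (k : ℕ) (T : Finset (Fin n)), T.card = k → ∀ (c : ℝ) (A B : Fin n → ℕ → ℝ),
      (∀ i ∈ T, ∀ j, j < k → c ≤ A i j ∧ A i j ≤ B i j ∧ B i j ≤ 1) →
      (∀ i ∈ T, ∀ j, j + 1 < k → B i j + s ≤ A i (j + 1)) →
      ∃ α β : Fin n → ℝ,
        (∀ i ∈ T, ∀ j ∈ T, i ≠ j → β i + s ≤ α j ∨ β j + s ≤ α i) ∧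
        (∀ i ∈ T, ∃ j, j < k ∧ α i = A i j ∧ β i = B i j) := by
  intro k
  induction k with
  | zero =>
    intro T hT c A B _ _
    have : T = ∅ := Finset.card_eq_zero.mp hT
    subst this
    exact ⟨0, 0, by simp, by simp⟩
  | succ k ih =>
    intro T hT c A B h1 h2
    have hTne : T.Nonempty := Finset.card_pos.mp (by omega)
    obtain ⟨i0, hi0T, hi0min⟩ := T.exists_min_image (fun i => B i 0) hTne
    set c' := B i0 0 + s with hc'
    set T' := T.erase i0 with hT'def
    have hT'card : T'.card = k := by
      rw [hT'def, Finset.card_erase_of_mem hi0T, hT]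
      omega
    have hmemT' : ∀ i ∈ T', i ∈ T := fun i hi => Finset.mem_of_mem_erase hi
    have h1' : ∀ i ∈ T', ∀ j, j < k →
        c' ≤ A i (j + 1) ∧ A i (j + 1) ≤ B i (j + 1) ∧ B i (j + 1) ≤ 1 := by
      intro i hi j hj
      have hiT := hmemT' i hi
      have hb0 : B i0 0 ≤ B i 0 := hi0min i hiT
      have hbj : B i 0 ≤ B i j :=
        chainB hs (fun j hj => (h1 i hiT j hj).2.1) (h2 i hiT) j (by omega) 0 (by omega)
      have hgap := h2 i hiT j (by omega)
      have hb := h1 i hiT (j + 1) (by omega)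
      exact ⟨by linarith, hb.2.1, hb.2.2⟩
    have h2' : ∀ i ∈ T', ∀ j, j + 1 < k → B i (j + 1) + s ≤ A i (j + 1 + 1) :=
      fun i hi j hj => h2 i (hmemT' i hi) (j + 1) (by omega)
    obtain ⟨α', β', hsep', hmem'⟩ :=
      ih T' hT'card c' (fun i j => A i (j + 1)) (fun i j => B i (j + 1)) h1' h2'
    have key : ∀ i ∈ T', c' ≤ α' i := by
      intro i hi
      obtain ⟨j', hj', hα, _⟩ := hmem' i hi
      rw [hα]; exact (h1' i hi j' hj').1
    refine ⟨fun i => if i = i0 then A i0 0 else α' i,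
            fun i => if i = i0 then B i0 0 else β' i, ?_, ?_⟩
    · intro i hiT j hjT hij
      by_cases hi : i = i0
      · subst hi
        left
        simp only [if_pos rfl, if_neg (Ne.symm hij)]
        exact key j (Finset.mem_erase.mpr ⟨Ne.symm hij, hjT⟩)
      · by_cases hj : j = i0
        · subst hj
          right
          simp only [if_pos rfl, if_neg hi]
          exact key i (Finset.mem_erase.mpr ⟨hi, hiT⟩)
        · simp only [if_neg hi, if_neg hj]
          exact hsep' i (Finset.mem_erase.mpr ⟨hi, hiT⟩) j
            (Finset.mem_erase.mpr ⟨hj, hjT⟩) hij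
    · intro i hiT
      by_cases hi : i = i0
      · subst hi
        exact ⟨0, by omega, by simp, by simp⟩
      · obtain ⟨j', hj', hα, hβ⟩ := hmem' i (Finset.mem_erase.mpr ⟨hi, hiT⟩)
        exact ⟨j' + 1, by omega, by simp [hi, hα], by simp [hi, hβ]⟩

/-- The maximin share is attained by some separated partition. -/
lemma exists_opt (f : ℝ → ℝ) (n : ℕ) (hn : 2 ≤ n) (hs : 0 < s)
    (hs' : s < 1 / ((n : ℝ) - 1)) (hfi : IntervalIntegrable f volume 0 1) :
    ∃ a b : ℕ → ℝ, isSepPartition n s a b ∧ MMScake f n s = minValue f n a b := by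
  have hnpos : 0 < n := by omega
  haveI : Nonempty (Fin n) := ⟨⟨0, hnpos⟩⟩
  have hn1 : (0 : ℝ) < (n : ℝ) - 1 := by
    have : (2 : ℝ) ≤ (n : ℝ) := by exact_mod_cast hn
    linarith
  set prim : ℝ → ℝ := fun x => ∫ t in (0 : ℝ)..x, f t with hprimdef
  have hprimc : ContinuousOn prim (Set.Icc 0 1) := by
    have h := intervalIntegral.continuousOn_primitive_interval' hfi
      (Set.left_mem_uIcc (a := (0:ℝ)) (b := 1))
    rwa [Set.uIcc_of_le zero_le_one] at h
  have hsub : ∀ x ∈ Set.Icc (0:ℝ) 1, IntervalIntegrable f volume 0 x := by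
    intro x hx
    refine hfi.mono_set ?_
    rw [Set.uIcc_of_le hx.1, Set.uIcc_of_le zero_le_one]
    exact Set.Icc_subset_Icc le_rfl hx.2
  have hcv : ∀ x ∈ Set.Icc (0:ℝ) 1, ∀ y ∈ Set.Icc (0:ℝ) 1,
      cakeVal f x y = prim y - prim x := by
    intro x hx y hy
    exact (intervalIntegral.integral_interval_sub_left (hsub y hy) (hsub x hx)).symm
  set K : Set ((Fin n → ℝ) × (Fin n → ℝ)) :=
    {p | (∀ j, 0 ≤ p.1 j ∧ p.1 j ≤ p.2 j ∧ p.2 j ≤ 1) ∧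
      ∀ (j : ℕ) (h : j + 1 < n), p.2 ⟨j, by omega⟩ + s ≤ p.1 ⟨j + 1, h⟩} with hKdef
  have hKclosed : IsClosed K := by
    rw [hKdef, Set.setOf_and]
    apply IsClosed.inter
    · rw [Set.setOf_forall]
      refine isClosed_iInter fun j => ?_
      rw [Set.setOf_and, Set.setOf_and]
      refine IsClosed.inter ?_ (IsClosed.inter ?_ ?_)
      · exact isClosed_le continuous_const ((continuous_apply j).comp continuous_fst)
      · exact isClosed_le ((continuous_apply j).comp continuous_fst)
          ((continuous_apply j).comp continuous_snd)
      · exact isClosed_le ((continuous_apply j).comp continuous_snd) continuous_const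
    · rw [Set.setOf_forall]
      refine isClosed_iInter fun j => ?_
      rw [Set.setOf_forall]
      refine isClosed_iInter fun h => ?_
      exact isClosed_le (((continuous_apply _).comp continuous_snd).add continuous_const)
        ((continuous_apply _).comp continuous_fst)
  have hsubC : K ⊆ (Set.univ.pi fun _ : Fin n => Set.Icc (0:ℝ) 1) ×ˢ
      (Set.univ.pi fun _ : Fin n => Set.Icc (0:ℝ) 1) := by
    rintro p ⟨hp1, _⟩
    exact ⟨fun j _ => ⟨(hp1 j).1, le_trans (hp1 j).2.1 (hp1 j).2.2⟩,
      fun j _ => ⟨le_trans (hp1 j).1 (hp1 j).2.1, (hp1 j).2.2⟩⟩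
  have hKcomp : IsCompact K :=
    IsCompact.of_isClosed_subset
      ((isCompact_univ_pi fun _ => isCompact_Icc).prod
        (isCompact_univ_pi fun _ => isCompact_Icc)) hKclosed hsubC
  have hKne : K.Nonempty := by
    refine ⟨(fun j => (j : ℝ) * s, fun j => (j : ℝ) * s), ?_, ?_⟩
    · intro j
      dsimp only
      have hj : ((j : ℕ) : ℝ) ≤ (n : ℝ) - 1 := by
        have h := j.isLt
        have : ((j : ℕ) : ℝ) + 1 ≤ (n : ℝ) := by exact_mod_cast h
        linarith
      have h1 : ((j : ℕ) : ℝ) * s ≤ ((n : ℝ) - 1) * s :=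
        mul_le_mul_of_nonneg_right hj hs.le
      have h2 : ((n : ℝ) - 1) * s < 1 := by
        have := mul_lt_mul_of_pos_left hs' hn1
        rwa [mul_one_div_cancel hn1.ne'] at this
      exact ⟨mul_nonneg (Nat.cast_nonneg _) hs.le, le_refl _, by linarith⟩
    · intro j h
      apply le_of_eq
      show ((j : ℕ) : ℝ) * s + s = ((j + 1 : ℕ) : ℝ) * s
      push_cast
      ring
  set F : (Fin n → ℝ) × (Fin n → ℝ) → ℝ :=
    fun p => ⨅ j : Fin n, (prim (p.2 j) - prim (p.1 j)) with hFdef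
  have hFc : ContinuousOn F K := by
    have hFeq : F = fun p => Finset.univ.inf' Finset.univ_nonempty
        (fun j : Fin n => prim (p.2 j) - prim (p.1 j)) := by
      funext p
      rw [hFdef, Finset.inf'_univ_eq_ciInf]
    rw [hFeq]
    apply ContinuousOn.finset_inf'_apply
    intro j _
    refine ContinuousOn.sub ?_ ?_
    · exact hprimc.comp ((continuous_apply j).comp continuous_snd).continuousOn
        (fun p hp => ⟨le_trans (hp.1 j).1 (hp.1 j).2.1, (hp.1 j).2.2⟩)
    · exact hprimc.comp ((continuous_apply j).comp continuous_fst).continuousOn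
        (fun p hp => ⟨(hp.1 j).1, le_trans (hp.1 j).2.1 (hp.1 j).2.2⟩)
  obtain ⟨p0, hp0K, hp0max'⟩ := hKcomp.exists_isMaxOn hKne hFc
  have hp0max : ∀ q ∈ K, F q ≤ F p0 := fun q hq => hp0max' hq
  set a : ℕ → ℝ := fun j => if h : j < n then p0.1 ⟨j, h⟩ else 1 with hadef
  set b : ℕ → ℝ := fun j => if h : j < n then p0.2 ⟨j, h⟩ else 1 with hbdef
  have ha : ∀ (j) (h : j < n), a j = p0.1 ⟨j, h⟩ := fun j h => dif_pos h
  have hb : ∀ (j) (h : j < n), b j = p0.2 ⟨j, h⟩ := fun j h => dif_pos h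
  have hpart : isSepPartition n s a b := by
    refine ⟨?_, ?_, ?_, ?_⟩
    · rw [ha 0 hnpos]; exact (hp0K.1 _).1
    · intro j hj; rw [ha j hj, hb j hj]; exact (hp0K.1 _).2.1
    · intro j hj
      rw [hb j (by omega), ha (j + 1) hj]
      exact hp0K.2 j hj
    · rw [hb (n - 1) (by omega)]; exact (hp0K.1 _).2.2
  have hmemIcc : ∀ j : Fin n, p0.1 j ∈ Set.Icc (0:ℝ) 1 ∧ p0.2 j ∈ Set.Icc (0:ℝ) 1 :=
    fun j => ⟨⟨(hp0K.1 j).1, le_trans (hp0K.1 j).2.1 (hp0K.1 j).2.2⟩,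
      ⟨le_trans (hp0K.1 j).1 (hp0K.1 j).2.1, (hp0K.1 j).2.2⟩⟩
  have hMv : minValue f n a b = F p0 := by
    rw [minValue, hFdef]
    refine iInf_congr fun j => ?_
    rw [ha (j : ℕ) j.isLt, hb (j : ℕ) j.isLt]
    have h1 : (⟨(j : ℕ), j.isLt⟩ : Fin n) = j := by ext; rfl
    rw [h1]
    exact hcv _ (hmemIcc j).1 _ (hmemIcc j).2
  have hgreat : IsGreatest
      {m | ∃ a b : ℕ → ℝ, isSepPartition n s a b ∧ m = minValue f n a b} (F p0) := by
    constructor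
    · exact ⟨a, b, hpart, hMv.symm⟩
    · rintro m ⟨a', b', hp', rfl⟩
      obtain ⟨ha0, hab, hgap, hb1⟩ := hp'
      have hbnds : ∀ j, j < n → (0:ℝ) ≤ a' j ∧ a' j ≤ b' j ∧ b' j ≤ 1 := by
        intro j hj
        exact ⟨lowA hs ha0 hab hgap j hj, hab j hj,
          le_trans (chainB hs hab hgap (n - 1) (by omega) j (by omega)) hb1⟩
      set q : (Fin n → ℝ) × (Fin n → ℝ) :=
        (fun j : Fin n => a' (j : ℕ), fun j : Fin n => b' (j : ℕ)) with hqdef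
      have hqK : q ∈ K := by
        constructor
        · intro j; exact hbnds (j : ℕ) j.isLt
        · intro j h; exact hgap j h
      have hq : minValue f n a' b' = F q := by
        rw [minValue, hFdef]
        refine iInf_congr fun j => ?_
        have h1 := hbnds (j : ℕ) j.isLt
        exact hcv _ ⟨h1.1, le_trans h1.2.1 h1.2.2⟩ _ ⟨le_trans h1.1 h1.2.1, h1.2.2⟩
      rw [hq]
      exact hp0max q hqK
  refine ⟨a, b, hpart, ?_⟩
  rw [MMScake, hgreat.csSup_eq, hMv]

end Stmt3Aux

/-- There exists an `s`-separated connected allocation in which every agent receives at least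
her maximin share. -/
theorem stmt_3 (n : ℕ) (hn : 2 ≤ n) (s : ℝ) (hs : 0 < s) (hs' : s < 1 / ((n : ℝ) - 1))
    (f : Fin n → ℝ → ℝ) (hf0 : ∀ i t, 0 ≤ f i t)
    (hfi : ∀ i, IntervalIntegrable (f i) volume 0 1)
    (hf1 : ∀ i, cakeVal (f i) 0 1 = 1) :
    ∃ a b : Fin n → ℝ,
      (∀ i, 0 ≤ a i ∧ a i ≤ b i ∧ b i ≤ 1) ∧
      (∀ i j, i ≠ j → b i + s ≤ a j ∨ b j + s ≤ a i) ∧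
      (∀ i, MMScake (f i) n s ≤ cakeVal (f i) (a i) (b i)) := by
  classical
  choose a b hpart hMMS using fun i => Stmt3Aux.exists_opt (f i) n hn hs hs' (hfi i)
  have hnpos : 0 < n := by omega
  have h1 : ∀ i ∈ (Finset.univ : Finset (Fin n)), ∀ j, j < n →
      (0:ℝ) ≤ a i j ∧ a i j ≤ b i j ∧ b i j ≤ 1 := by
    intro i _ j hj
    obtain ⟨ha0, hab, hgap, hb1⟩ := hpart i
    exact ⟨Stmt3Aux.lowA hs ha0 hab hgap j hj, hab j hj,
      le_trans (Stmt3Aux.chainB hs hab hgap (n - 1) (by omega) j (by omega)) hb1⟩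
  have h2 : ∀ i ∈ (Finset.univ : Finset (Fin n)), ∀ j, j + 1 < n →
      b i j + s ≤ a i (j + 1) := fun i _ j hj => (hpart i).2.2.1 j hj
  obtain ⟨α, β, hsep, hmem⟩ :=
    Stmt3Aux.alloc n hs n Finset.univ (by simp) 0 a b h1 h2
  refine ⟨α, β, ?_, ?_, ?_⟩
  · intro i
    obtain ⟨j, hj, hα, hβ⟩ := hmem i (Finset.mem_univ i)
    obtain ⟨hc, hab, hb1⟩ := h1 i (Finset.mem_univ i) j hj
    refine ⟨hα ▸ hc, ?_, hβ ▸ hb1⟩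
    rw [hα, hβ]; exact hab
  · intro i j hij
    exact hsep i (Finset.mem_univ i) j (Finset.mem_univ j) hij
  · intro i
    obtain ⟨j, hj, hα, hβ⟩ := hmem i (Finset.mem_univ i)
    rw [hMMS i, hα, hβ]
    have hbdd : BddBelow (Set.range fun j' : Fin n =>
        cakeVal (f i) (a i ((j' : Fin n) : ℕ)) (b i ((j' : Fin n) : ℕ))) :=
      (Set.finite_range _).bddBelow
    exact ciInf_le hbdd (⟨j, hj⟩ : Fin n)
end

section
/- Let 1/4 < s < 1/2 and 0 < ε < min{s - 1/4, 1/2 - s}. On the pie of circumference 1, let Alice's valuation be uniform on the two arcs of length ε centered at points 0 and 1/2 (each worth 1/2, zero elsewhere), and let Bob's valuation be uniform on the two arcs of length ε centered at points 1/4 and 3/4 (each worth 1/2, zero elsewhere). Then (a) the maximin share of each agent (over s-separated partitions of the pie into 2 arcs) is 1/2, but (b) in every s-separated allocation of two arcs to the two agents, at least one agent receives value 0. In particular, no MMS-fair allocation exists, and no positive multiplicative approximation of the maximin share can be guaranteed in pie cutting with separation. -/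
open MeasureTheory

def isPiePartition (k : ℕ) (s : ℝ) (a b : ℕ → ℝ) : Prop :=
  (∀ j, j < k → a j ≤ b j) ∧ (∀ j, j + 1 < k → b j + s ≤ a (j + 1)) ∧
    b (k - 1) + s ≤ a 0 + 1

open Classical in
/-- Alice's density on the pie: uniform on the two arcs of length `ε` centered at `0` and
`1/2` (each worth `1/2`), zero elsewhere. -/
noncomputable def fAlice (ε : ℝ) (t : ℝ) : ℝ :=
  if Int.fract (t + ε / 2) < ε ∨ Int.fract (t + ε / 2 + 1 / 2) < ε then 1 / (2 * ε) else 0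

open Classical in
/-- Bob's density on the pie: uniform on the two arcs of length `ε` centered at `1/4` and
`3/4` (each worth `1/2`), zero elsewhere. -/
noncomputable def fBob (ε : ℝ) (t : ℝ) : ℝ :=
  if Int.fract (t + ε / 2 - 1 / 4) < ε ∨ Int.fract (t + ε / 2 - 3 / 4) < ε then 1 / (2 * ε)
  else 0

lemma alice_meas (ε : ℝ) : Measurable (fAlice ε) := by
  have h1 : Measurable fun t : ℝ => Int.fract (t + ε / 2) :=
    measurable_fract.comp (measurable_id.add_const _)
  have h2 : Measurable fun t : ℝ => Int.fract (t + ε / 2 + 1 / 2) :=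
    measurable_fract.comp ((measurable_id.add_const _).add_const _)
  unfold fAlice
  exact Measurable.ite ((h1 measurableSet_Iio).union (h2 measurableSet_Iio))
    measurable_const measurable_const

lemma alice_nonneg {ε : ℝ} (hε : 0 < ε) (t : ℝ) : 0 ≤ fAlice ε t := by
  unfold fAlice; split_ifs
  · positivity
  · exact le_refl _

lemma alice_intble {ε : ℝ} (hε : 0 < ε) (a b : ℝ) :
    IntervalIntegrable (fAlice ε) volume a b := by
  rw [intervalIntegrable_iff]
  apply Measure.integrableOn_of_bounded (M := 1 / (2 * ε)) measure_Ioc_lt_top.ne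
    (alice_meas ε).aestronglyMeasurable
  apply ae_of_all
  intro t
  rw [Real.norm_eq_abs, abs_of_nonneg (alice_nonneg hε t)]
  unfold fAlice; split_ifs
  · exact le_refl _
  · positivity

lemma alice_periodic (ε : ℝ) : Function.Periodic (fAlice ε) 1 := by
  intro t; unfold fAlice
  rw [show t + 1 + ε / 2 = t + ε / 2 + 1 by ring,
    show t + ε / 2 + 1 + 1 / 2 = t + ε / 2 + 1 / 2 + 1 by ring,
    Int.fract_add_one, Int.fract_add_one]

lemma int_const {f : ℝ → ℝ} {a b c : ℝ} (hab : a ≤ b) (h : ∀ t ∈ Set.Ioo a b, f t = c) :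
    ∫ t in a..b, f t = (b - a) * c := by
  rw [intervalIntegral.integral_of_le hab, integral_Ioc_eq_integral_Ioo,
    setIntegral_congr_fun measurableSet_Ioo h, setIntegral_const, measureReal_def, Real.volume_Ioo,
    ENNReal.toReal_ofReal (by linarith), smul_eq_mul]

section vals
variable {ε : ℝ} (hε : 0 < ε) (hε4 : ε < 1 / 4)
include hε hε4

lemma alice_arc0 : ∀ t ∈ Set.Ioo (-(ε / 2)) (ε / 2), fAlice ε t = 1 / (2 * ε) := by
  intro t ht
  unfold fAlice
  rw [if_pos]
  left
  rw [Int.fract_eq_self.2 ⟨by linarith [ht.1], by linarith [ht.2]⟩]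
  linarith [ht.2]

lemma alice_arc1 : ∀ t ∈ Set.Ioo (1 / 2 - ε / 2) (1 / 2 + ε / 2), fAlice ε t = 1 / (2 * ε) := by
  intro t ht
  obtain ⟨ht1, ht2⟩ := ht
  unfold fAlice
  rw [if_pos]
  right
  rw [show t + ε / 2 + 1 / 2 = (t + ε / 2 - 1 / 2) + 1 by ring, Int.fract_add_one,
    Int.fract_eq_self.2 ⟨by linarith, by linarith⟩]
  linarith

lemma alice_gap0 : ∀ t ∈ Set.Ioo (ε / 2) (1 / 2 - ε / 2), fAlice ε t = 0 := by
  intro t ht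
  obtain ⟨ht1, ht2⟩ := ht
  unfold fAlice
  rw [if_neg]
  push_neg
  constructor
  · rw [Int.fract_eq_self.2 ⟨by linarith, by linarith⟩]; linarith
  · rw [Int.fract_eq_self.2 ⟨by linarith, by linarith⟩]; linarith

lemma alice_gap1 : ∀ t ∈ Set.Ioo (1 / 2 + ε / 2) (1 - ε / 2), fAlice ε t = 0 := by
  intro t ht
  obtain ⟨ht1, ht2⟩ := ht
  unfold fAlice
  rw [if_neg]
  push_neg
  constructor
  · rw [Int.fract_eq_self.2 ⟨by linarith, by linarith⟩]; linarith
  · rw [show t + ε / 2 + 1 / 2 = (t + ε / 2 - 1 / 2) + 1 by ring, Int.fract_add_one,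
      Int.fract_eq_self.2 ⟨by linarith, by linarith⟩]
    linarith

lemma alice_total (a : ℝ) : ∫ t in a..(a + 1), fAlice ε t = 1 := by
  rw [(alice_periodic ε).intervalIntegral_add_eq a (-(ε / 2))]
  have i1 : ∫ t in (-(ε / 2))..(ε / 2), fAlice ε t = 1 / 2 := by
    rw [int_const (by linarith) (alice_arc0 hε hε4)]
    field_simp
    ring
  have i2 : ∫ t in (ε / 2)..(1 / 2 - ε / 2), fAlice ε t = 0 := by
    rw [int_const (by linarith) (alice_gap0 hε hε4)]; ring
  have i3 : ∫ t in (1 / 2 - ε / 2)..(1 / 2 + ε / 2), fAlice ε t = 1 / 2 := by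
    rw [int_const (by linarith) (alice_arc1 hε hε4)]
    field_simp
    ring
  have i4 : ∫ t in (1 / 2 + ε / 2)..(1 - ε / 2), fAlice ε t = 0 := by
    rw [int_const (by linarith) (alice_gap1 hε hε4)]; ring
  have e : -(ε / 2) + 1 = 1 - ε / 2 := by ring
  rw [e]
  rw [← intervalIntegral.integral_add_adjacent_intervals (b := 1 / 2 + ε / 2)
      (alice_intble hε _ _) (alice_intble hε _ _),
    ← intervalIntegral.integral_add_adjacent_intervals (b := 1 / 2 - ε / 2)
      (alice_intble hε _ _) (alice_intble hε _ _),
    ← intervalIntegral.integral_add_adjacent_intervals (b := ε / 2)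
      (alice_intble hε _ _) (alice_intble hε _ _), i1, i2, i3, i4]
  norm_num

lemma alice_sum {s : ℝ} (hspos : 0 < s) {a0 b0 a1 b1 : ℝ} (h1 : a0 ≤ b0) (h2 : a1 ≤ b1)
    (h3 : b0 + s ≤ a1) (h4 : b1 + s ≤ a0 + 1) :
    (∫ t in a0..b0, fAlice ε t) + ∫ t in a1..b1, fAlice ε t ≤ 1 := by
  have htot := alice_total hε hε4 a0
  have key : (∫ t in a0..b0, fAlice ε t) + (∫ t in b0..a1, fAlice ε t)
      + ((∫ t in a1..b1, fAlice ε t) + ∫ t in b1..(a0 + 1), fAlice ε t)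
      = ∫ t in a0..(a0 + 1), fAlice ε t := by
    rw [intervalIntegral.integral_add_adjacent_intervals (alice_intble hε _ _)
        (alice_intble hε _ _),
      intervalIntegral.integral_add_adjacent_intervals (alice_intble hε _ _)
        (alice_intble hε _ _),
      intervalIntegral.integral_add_adjacent_intervals (alice_intble hε _ _)
        (alice_intble hε _ _)]
  have n1 : 0 ≤ ∫ t in b0..a1, fAlice ε t :=
    intervalIntegral.integral_nonneg (by linarith) (fun u _ => alice_nonneg hε u)
  have n2 : 0 ≤ ∫ t in b1..(a0 + 1), fAlice ε t :=
    intervalIntegral.integral_nonneg (by linarith) (fun u _ => alice_nonneg hε u)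
  linarith

end vals

lemma bob_eq (ε t : ℝ) : fBob ε t = fAlice ε (t - 1 / 4) := by
  unfold fBob fAlice
  rw [show t - 1 / 4 + ε / 2 + 1 / 2 = (t + ε / 2 - 3 / 4) + 1 by ring, Int.fract_add_one,
    show t - 1 / 4 + ε / 2 = t + ε / 2 - 1 / 4 by ring]

lemma bob_int (ε a b : ℝ) :
    ∫ t in a..b, fBob ε t = ∫ t in (a - 1 / 4)..(b - 1 / 4), fAlice ε t := by
  simp only [bob_eq]
  exact intervalIntegral.integral_comp_sub_right (fAlice ε) (1 / 4)

lemma exists_pt {f : ℝ → ℝ} {a b : ℝ} (hab : a ≤ b) (h : (∫ t in a..b, f t) ≠ 0) :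
    ∃ t ∈ Set.Ioc a b, f t ≠ 0 := by
  by_contra hc
  push_neg at hc
  apply h
  rw [intervalIntegral.integral_of_le hab,
    setIntegral_congr_fun measurableSet_Ioc (g := fun _ => (0 : ℝ)) (fun t ht => hc t ht)]
  simp

lemma alice_pt {ε t : ℝ} (h : fAlice ε t ≠ 0) : ∃ n : ℤ, |t - n / 2| ≤ ε / 2 := by
  unfold fAlice at h
  split_ifs at h with hc
  · rcases hc with h1 | h2
    · refine ⟨2 * ⌊t + ε / 2⌋, ?_⟩
      have hf := Int.fract_nonneg (t + ε / 2)
      rw [← Int.self_sub_floor] at h1 hf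
      rw [abs_le]
      push_cast
      constructor <;> linarith
    · refine ⟨2 * ⌊t + ε / 2 + 1 / 2⌋ - 1, ?_⟩
      have hf := Int.fract_nonneg (t + ε / 2 + 1 / 2)
      rw [← Int.self_sub_floor] at h2 hf
      rw [abs_le]
      push_cast
      constructor <;> linarith
  · simp at h

lemma bob_pt {ε t : ℝ} (h : fBob ε t ≠ 0) : ∃ n : ℤ, |t - 1 / 4 - n / 2| ≤ ε / 2 := by
  unfold fBob at h
  split_ifs at h with hc
  · rcases hc with h1 | h2
    · refine ⟨2 * ⌊t + ε / 2 - 1 / 4⌋, ?_⟩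
      have hf := Int.fract_nonneg (t + ε / 2 - 1 / 4)
      rw [← Int.self_sub_floor] at h1 hf
      rw [abs_le]
      push_cast
      constructor <;> linarith
    · refine ⟨2 * ⌊t + ε / 2 - 3 / 4⌋ + 1, ?_⟩
      have hf := Int.fract_nonneg (t + ε / 2 - 3 / 4)
      rw [← Int.self_sub_floor] at h2 hf
      rw [abs_le]
      push_cast
      constructor <;> linarith
  · simp at h

lemma contra1 {s ε x y : ℝ} {n m : ℤ} (he1 : ε < s - 1 / 4) (hx : |x - n / 2| ≤ ε / 2)
    (hy : |y - 1 / 4 - m / 2| ≤ ε / 2) (h1 : s < y - x) (h2 : y - x < 1 - s) : False := by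
  rw [abs_le] at hx hy
  have d1 : (0 : ℤ) < m - n := by
    exact_mod_cast (by push_cast; linarith [hx.1, hx.2, hy.1, hy.2] : (0 : ℝ) < ((m - n : ℤ) : ℝ))
  have d2 : (m - n : ℤ) < 1 := by
    exact_mod_cast (by push_cast; linarith [hx.1, hx.2, hy.1, hy.2] : ((m - n : ℤ) : ℝ) < 1)
  omega

lemma contra2 {s ε x y : ℝ} {n m : ℤ} (he1 : ε < s - 1 / 4) (hx : |x - n / 2| ≤ ε / 2)
    (hy : |y - 1 / 4 - m / 2| ≤ ε / 2) (h1 : s < x - y) (h2 : x - y < 1 - s) : False := by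
  rw [abs_le] at hx hy
  have d1 : (1 : ℤ) < n - m := by
    exact_mod_cast (by push_cast; linarith [hx.1, hx.2, hy.1, hy.2] : (1 : ℝ) < ((n - m : ℤ) : ℝ))
  have d2 : (n - m : ℤ) < 2 := by
    exact_mod_cast (by push_cast; linarith [hx.1, hx.2, hy.1, hy.2] : ((n - m : ℤ) : ℝ) < 2)
  omega

/-- In the instance of Figure 1: (a) the maximin share of each agent over `s`-separated
partitions of the pie into two arcs is `1/2`, but (b) in every `s`-separated allocation of two
arcs to the two agents, at least one agent receives value `0`. -/
theorem stmt_6 (s ε : ℝ) (hs : 1 / 4 < s) (hs' : s < 1 / 2)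
    (hε : 0 < ε) (hε' : ε < min (s - 1 / 4) (1 / 2 - s)) :
    (IsGreatest
        {m | ∃ a b : ℕ → ℝ, isPiePartition 2 s a b ∧
          m = min (∫ t in (a 0)..(b 0), fAlice ε t) (∫ t in (a 1)..(b 1), fAlice ε t)} (1 / 2)) ∧
    (IsGreatest
        {m | ∃ a b : ℕ → ℝ, isPiePartition 2 s a b ∧
          m = min (∫ t in (a 0)..(b 0), fBob ε t) (∫ t in (a 1)..(b 1), fBob ε t)} (1 / 2)) ∧
    (∀ a b : ℕ → ℝ, isPiePartition 2 s a b →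
      ((∫ t in (a 0)..(b 0), fAlice ε t) = 0 ∨ (∫ t in (a 1)..(b 1), fBob ε t) = 0) ∧
      ((∫ t in (a 1)..(b 1), fAlice ε t) = 0 ∨ (∫ t in (a 0)..(b 0), fBob ε t) = 0)) := by
  have he1 : ε < s - 1 / 4 := lt_of_lt_of_le hε' (min_le_left _ _)
  have he2 : ε < 1 / 2 - s := lt_of_lt_of_le hε' (min_le_right _ _)
  have hε4 : ε < 1 / 4 := by linarith
  have hspos : (0 : ℝ) < s := by linarith
  have iA0 : ∫ t in (-(ε / 2))..(ε / 2), fAlice ε t = 1 / 2 := by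
    rw [int_const (by linarith) (alice_arc0 hε hε4)]; field_simp; ring
  have iA1 : ∫ t in (1 / 2 - ε / 2)..(1 / 2 + ε / 2), fAlice ε t = 1 / 2 := by
    rw [int_const (by linarith) (alice_arc1 hε hε4)]; field_simp; ring
  refine ⟨⟨?_, ?_⟩, ⟨?_, ?_⟩, ?_⟩
  · -- Alice membership
    refine ⟨(fun j => if j = 0 then -(ε / 2) else 1 / 2 - ε / 2),
      (fun j => if j = 0 then ε / 2 else 1 / 2 + ε / 2), ⟨fun j hj => ?_, fun j hj => ?_, ?_⟩, ?_⟩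
    · interval_cases j <;> simp <;> linarith
    · have hj0 : j = 0 := by omega
      subst hj0; simp; linarith
    · simp; linarith
    · simp only [show (1 : ℕ) ≠ 0 by norm_num, if_true, if_false, ite_true, ite_false,
        reduceIte]
      rw [iA0, iA1, min_self]
  · -- Alice upper bound
    rintro m ⟨a, b, ⟨hab, hgap, hwrap⟩, rfl⟩
    have h1 := hab 0 (by norm_num)
    have h2 := hab 1 (by norm_num)
    have h3 := hgap 0 (by norm_num)
    have hw : b 1 + s ≤ a 0 + 1 := hwrap
    have hsum := alice_sum hε hε4 hspos h1 h2 h3 hw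
    by_contra hco
    push_neg at hco
    rw [lt_min_iff] at hco
    linarith [hco.1, hco.2]
  · -- Bob membership
    refine ⟨(fun j => if j = 0 then 1 / 4 - ε / 2 else 3 / 4 - ε / 2),
      (fun j => if j = 0 then 1 / 4 + ε / 2 else 3 / 4 + ε / 2), ⟨fun j hj => ?_, fun j hj => ?_, ?_⟩, ?_⟩
    · interval_cases j <;> simp <;> linarith
    · have hj0 : j = 0 := by omega
      subst hj0; simp; linarith
    · simp; linarith
    · simp only [show (1 : ℕ) ≠ 0 by norm_num, if_true, if_false, ite_true, ite_false,
        reduceIte]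
      rw [bob_int, bob_int, show 1 / 4 - ε / 2 - 1 / 4 = -(ε / 2) by ring,
        show 1 / 4 + ε / 2 - 1 / 4 = ε / 2 by ring,
        show 3 / 4 - ε / 2 - 1 / 4 = 1 / 2 - ε / 2 by ring,
        show 3 / 4 + ε / 2 - 1 / 4 = 1 / 2 + ε / 2 by ring, iA0, iA1, min_self]
  · -- Bob upper bound
    rintro m ⟨a, b, ⟨hab, hgap, hwrap⟩, rfl⟩
    have h1 := hab 0 (by norm_num)
    have h2 := hab 1 (by norm_num)
    have h3 := hgap 0 (by norm_num)
    have hw : b 1 + s ≤ a 0 + 1 := hwrap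
    have hsum := alice_sum hε hε4 hspos (a0 := a 0 - 1 / 4) (b0 := b 0 - 1 / 4)
      (a1 := a 1 - 1 / 4) (b1 := b 1 - 1 / 4) (by linarith) (by linarith) (by linarith)
      (by linarith)
    rw [bob_int, bob_int] at *
    by_contra hco
    push_neg at hco
    rw [lt_min_iff] at hco
    linarith [hco.1, hco.2]
  · -- part (b)
    intro a b hp
    obtain ⟨hab, hgap, hwrap⟩ := hp
    have h1 := hab 0 (by norm_num)
    have h2 := hab 1 (by norm_num)
    have h3 := hgap 0 (by norm_num)
    have hw : b 1 + s ≤ a 0 + 1 := hwrap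
    constructor
    · by_contra hco
      push_neg at hco
      obtain ⟨hA, hB⟩ := hco
      obtain ⟨x, hx, hxf⟩ := exists_pt h1 hA
      obtain ⟨y, hy, hyf⟩ := exists_pt h2 hB
      obtain ⟨n, hn⟩ := alice_pt hxf
      obtain ⟨m, hm⟩ := bob_pt hyf
      exact contra1 he1 hn hm (by linarith [hx.2, hy.1]) (by linarith [hx.1, hy.2])
    · by_contra hco
      push_neg at hco
      obtain ⟨hA, hB⟩ := hco
      obtain ⟨x, hx, hxf⟩ := exists_pt h2 hA
      obtain ⟨y, hy, hyf⟩ := exists_pt h1 hB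
      obtain ⟨n, hn⟩ := alice_pt hxf
      obtain ⟨m, hm⟩ := bob_pt hyf
      exact contra2 he1 hn hm (by linarith [hy.2, hx.1]) (by linarith [hy.1, hx.2])
end

section
/- Let f: [0,1] → ℝ≥0 be integrable with ∫₀¹ f = 1, v(x,y) = ∫ₓʸ f, n ≥ 2, and s ∈ (0, 1/(n-1)). Consider any exactly s-separated partition of the cake [0,1] into n intervals (the first piece starts at 0, the last ends at 1, and consecutive pieces are separated by exactly s). Then at least one piece of this partition has value at least MMS^{n,s}, the maximin share of the valuation v with n pieces and separation s. -/
open MeasureTheory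

/-- An exactly `s`-separated partition of `[0,1]` into `n` pieces, represented by cut points
`x 0 = -s < x 1 < … < x n = 1`, where piece `j` (for `0 ≤ j < n`) is `[x j + s, x (j+1)]`. -/
def isExactCuts (n : ℕ) (s : ℝ) (x : ℕ → ℝ) : Prop :=
  x 0 = -s ∧ x n = 1 ∧ ∀ j, j < n → x j + s ≤ x (j + 1)

/-- The min-value of an exactly `s`-separated partition given by cut points `x`. -/
noncomputable def cutsMinVal (f : ℝ → ℝ) (n : ℕ) (s : ℝ) (x : ℕ → ℝ) : ℝ :=
  ⨅ j : Fin n, ∫ t in (x (j : ℕ) + s)..(x ((j : ℕ) + 1)), f t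

/-- The maximin share: the supremum of min-values over exactly `s`-separated partitions. -/
noncomputable def MMSexact (f : ℝ → ℝ) (n : ℕ) (s : ℝ) : ℝ :=
  sSup {m | ∃ x : ℕ → ℝ, isExactCuts n s x ∧ m = cutsMinVal f n s x}

/-- Crossing lemma: if two cut sequences agree at `0` and `n`, some index `j` has
`x j ≤ y j` and `y (j+1) ≤ x (j+1)`. -/
lemma exists_cross (n : ℕ) (hn : 0 < n) (x y : ℕ → ℝ) (h0 : x 0 = y 0) (hne : x n = y n) :
    ∃ j < n, x j ≤ y j ∧ y (j + 1) ≤ x (j + 1) := by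
  by_contra h
  push_neg at h
  have key : ∀ j, j ≤ n → x j ≤ y j := by
    intro j
    induction j with
    | zero => intro _; exact h0.le
    | succ k ih =>
      intro hk
      exact (h k (by omega) (ih (by omega))).le
  have hlt : x ((n - 1) + 1) < y ((n - 1) + 1) :=
    h (n - 1) (by omega) (key (n - 1) (by omega))
  have : (n - 1) + 1 = n := by omega
  rw [this] at hlt
  linarith [hne]

lemma cuts_mono (n : ℕ) (s : ℝ) (hs : 0 < s) (x : ℕ → ℝ)
    (hx : isExactCuts n s x) : ∀ k, k ≤ n → ∀ j, j ≤ k → x j ≤ x k := by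
  obtain ⟨h0, h1, hstep⟩ := hx
  intro k
  induction k with
  | zero =>
    intro _ j hj
    obtain rfl : j = 0 := by omega
    exact le_rfl
  | succ m ih =>
    intro hk j hj
    rcases Nat.eq_or_lt_of_le hj with rfl | hlt
    · exact le_rfl
    · have h1 : x j ≤ x m := ih (by omega) j (by omega)
      have h2 := hstep m (by omega)
      linarith

/-- In any exactly `s`-separated partition of the cake into `n` pieces, at least one piece has
value at least the maximin share. -/
theorem stmt_7 (n : ℕ) (hn : 2 ≤ n) (s : ℝ) (hs : 0 < s) (hs' : s < 1 / ((n : ℝ) - 1))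
    (f : ℝ → ℝ) (hf0 : ∀ t, 0 ≤ f t)
    (hfi : IntervalIntegrable f volume 0 1)
    (hf1 : (∫ t in (0:ℝ)..1, f t) = 1)
    (x : ℕ → ℝ) (hx : isExactCuts n s x) :
    ∃ j < n, MMSexact f n s ≤ ∫ t in (x j + s)..(x (j + 1)), f t := by
  obtain ⟨hx0, hx1, hxstep⟩ := hx
  have hmono := cuts_mono n s hs x ⟨hx0, hx1, hxstep⟩
  -- pieces lie in [0,1]
  have hpiece : ∀ j, j < n → 0 ≤ x j + s ∧ x j + s ≤ x (j + 1) ∧ x (j + 1) ≤ 1 := by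
    intro j hj
    refine ⟨?_, hxstep j hj, ?_⟩
    · have := hmono j (by omega) 0 (by omega); rw [hx0] at this; linarith
    · have := hmono n le_rfl (j + 1) (by omega); linarith [hx1]
  haveI : Nonempty (Fin n) := ⟨⟨0, by omega⟩⟩
  set g : Fin n → ℝ := fun j => ∫ t in (x (j : ℕ) + s)..(x ((j : ℕ) + 1)), f t with hg
  obtain ⟨j0, hj0⟩ := Finite.exists_max g
  refine ⟨(j0 : ℕ), j0.2, ?_⟩
  have hgnn : (0:ℝ) ≤ g j0 := by
    have h := hpiece (j0 : ℕ) j0.2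
    exact intervalIntegral.integral_nonneg h.2.1 (fun u _ => hf0 u)
  rw [MMSexact]
  refine Real.sSup_le ?_ hgnn
  rintro m ⟨y, ⟨hy0, hy1, hystep⟩, rfl⟩
  have hymono := cuts_mono n s hs y ⟨hy0, hy1, hystep⟩
  obtain ⟨j, hjn, hxy, hyx⟩ := exists_cross n (by omega) x y
    (by rw [hx0, hy0]) (by rw [hx1, hy1])
  -- min of y ≤ y-piece j ≤ x-piece j ≤ g j0
  have hmin : cutsMinVal f n s y ≤ ∫ t in (y j + s)..(y (j + 1)), f t := by
    have h := ciInf_le (f := fun i : Fin n => ∫ t in (y (i : ℕ) + s)..(y ((i : ℕ) + 1)), f t)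
      (Set.finite_range _).bddBelow ⟨j, hjn⟩
    simpa [cutsMinVal] using h
  have hsub : (∫ t in (y j + s)..(y (j + 1)), f t) ≤ ∫ t in (x j + s)..(x (j + 1)), f t := by
    have h := hpiece j hjn
    have hint : IntervalIntegrable f volume (x j + s) (x (j + 1)) := by
      apply hfi.mono_set
      rw [Set.uIcc_of_le h.2.1, Set.uIcc_of_le (by norm_num : (0:ℝ) ≤ 1)]
      exact Set.Icc_subset_Icc h.1 h.2.2
    exact intervalIntegral.integral_mono_interval (by linarith) (hystep j hjn)
      hyx (ae_of_all _ fun u => hf0 u) hint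
  calc cutsMinVal f n s y ≤ ∫ t in (y j + s)..(y (j + 1)), f t := hmin
    _ ≤ ∫ t in (x j + s)..(x (j + 1)), f t := hsub
    _ ≤ g j0 := hj0 ⟨j, hjn⟩
end

section
/- Let n ≥ 2, s ∈ (0, 1/(n-1)), and let f₁,…,fₙ: [0,1] → ℝ≥0 be integrable density functions with ∫₀¹ f_i = 1. For any permutation (ordering) of the agents, there exist cut points giving an exactly s-separated allocation of [0,1] into n intervals, assigned to the agents from left to right according to the ordering, such that the allocation is equitable: all agents receive equal value, v_i(A_i) = v_j(A_j) for all i,j. -/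
open MeasureTheory

namespace Stmt9Aux

open Set

lemma exists_inv {h : ℝ → ℝ} (hc : ContinuousOn h (Icc 0 1))
    (hm : StrictMonoOn h (Icc 0 1)) :
    ∃ g : ℝ → ℝ, ContinuousOn g (Icc (h 0) (h 1)) ∧
      (∀ c ∈ Icc (h 0) (h 1), g c ∈ Icc (0:ℝ) 1 ∧ h (g c) = c) ∧
      (∀ y ∈ Icc (0:ℝ) 1, g (h y) = y) := by
  have mem0 : (0:ℝ) ∈ Icc (0:ℝ) 1 := left_mem_Icc.2 zero_le_one
  have mem1 : (1:ℝ) ∈ Icc (0:ℝ) 1 := right_mem_Icc.2 zero_le_one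
  have himg : h '' Icc 0 1 = Icc (h 0) (h 1) := by
    apply Subset.antisymm
    · rintro _ ⟨y, hy, rfl⟩
      exact ⟨hm.monotoneOn mem0 hy hy.1, hm.monotoneOn hy mem1 hy.2⟩
    · exact intermediate_value_Icc zero_le_one hc
  let e : Icc (0:ℝ) 1 ≃o Icc (h 0) (h 1) :=
    (StrictMonoOn.orderIso h _ hm).trans (OrderIso.setCongr _ _ himg)
  have he : ∀ y : Icc (0:ℝ) 1, (e y : ℝ) = h y := fun y => rfl
  refine ⟨fun c => if hc : c ∈ Icc (h 0) (h 1) then (e.symm ⟨c, hc⟩ : ℝ) else 0, ?_, ?_, ?_⟩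
  · rw [continuousOn_iff_continuous_restrict]
    have : (Icc (h 0) (h 1)).domRestrict
        (fun c => if hc : c ∈ Icc (h 0) (h 1) then (e.symm ⟨c, hc⟩ : ℝ) else 0)
        = fun x => (e.symm x : ℝ) := by
      funext x
      exact dif_pos x.2
    rw [this]
    exact continuous_subtype_val.comp e.symm.continuous
  · intro c hcmem
    simp only [dif_pos hcmem]
    refine ⟨(e.symm ⟨c, hcmem⟩).2, ?_⟩
    have := e.apply_symm_apply ⟨c, hcmem⟩
    have := congrArg Subtype.val this
    rwa [he] at this
  · intro y hy
    have hmem : h y ∈ Icc (h 0) (h 1) := himg ▸ mem_image_of_mem h hy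
    simp only [dif_pos hmem]
    have : e ⟨y, hy⟩ = ⟨h y, hmem⟩ := Subtype.ext (he ⟨y, hy⟩)
    rw [← this, e.symm_apply_apply]

lemma cuts_mono {n : ℕ} {s : ℝ} (hs : 0 < s) {x : ℕ → ℝ} (hx : isExactCuts n s x) :
    ∀ d j, j + d ≤ n → x j ≤ x (j + d) := by
  intro d
  induction d with
  | zero => intro j _; exact le_rfl
  | succ d ih =>
    intro j hj
    have h1 : j + d < n := by omega
    calc x j ≤ x (j + d) := ih j (le_of_lt h1)
      _ ≤ x (j + d) + s := by linarith
      _ ≤ x (j + d + 1) := hx.2.2 _ h1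

lemma cuts_pieces {n : ℕ} {s : ℝ} (hs : 0 < s) {x : ℕ → ℝ} (hx : isExactCuts n s x) :
    ∀ j, j < n → 0 ≤ x j + s ∧ x j + s ≤ x (j + 1) ∧ x (j + 1) ≤ 1 := by
  intro j hj
  have h0 : x 0 ≤ x j := by
    have := cuts_mono hs hx j 0 (by omega)
    simpa using this
  have h1 : x (j + 1) ≤ x n := by
    have := cuts_mono hs hx (n - (j + 1)) (j + 1) (by omega)
    rwa [show j + 1 + (n - (j + 1)) = n by omega] at this
  refine ⟨?_, hx.2.2 j hj, by rw [← hx.2.1]; exact h1⟩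
  have := hx.1
  linarith

lemma cuts_coord {n : ℕ} {s : ℝ} (hs : 0 < s) {x : ℕ → ℝ} (hx : isExactCuts n s x) :
    ∀ j, j ≤ n → -s ≤ x j ∧ x j ≤ 1 := by
  intro j hj
  constructor
  · have := cuts_mono hs hx j 0 (by omega)
    simp only [Nat.zero_add] at this
    rw [← hx.1]; exact this
  · have := cuts_mono hs hx (n - j) j (by omega)
    rwa [show j + (n - j) = n by omega, hx.2.1] at this

noncomputable def gT (g h : ℕ → ℝ → ℝ) (s C c : ℝ) : ℕ → ℝ
  | 0 => 0
  | j + 1 => min (g j (min (h j (gT g h s C c j) + c) C) + s) 1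

noncomputable def gE (g h : ℕ → ℝ → ℝ) (s C c : ℝ) (j : ℕ) : ℝ :=
  g j (min (h j (gT g h s C c j) + c) C)

lemma step1 {n : ℕ} (hn : 2 ≤ n) {s : ℝ} (hs : 0 < s)
    (hsn : ((n:ℝ) - 1) * s < 1) {C : ℝ} (hC : 0 < C)
    (h : ℕ → ℝ → ℝ)
    (hcont : ∀ i, i < n → ContinuousOn (h i) (Icc 0 1))
    (hmono : ∀ i, i < n → StrictMonoOn (h i) (Icc 0 1))
    (h0 : ∀ i, i < n → h i 0 = 0) (h1 : ∀ i, i < n → h i 1 = C) :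
    ∃ x : ℕ → ℝ, isExactCuts n s x ∧
      ∃ c, ∀ j, j < n → h j (x (j + 1)) - h j (x j + s) = c := by
  have mem0 : (0:ℝ) ∈ Icc (0:ℝ) 1 := left_mem_Icc.2 zero_le_one
  have mem1 : (1:ℝ) ∈ Icc (0:ℝ) 1 := right_mem_Icc.2 zero_le_one
  have hcast : ((n - 1 : ℕ) : ℝ) = (n:ℝ) - 1 := by
    rw [Nat.cast_sub (by omega : 1 ≤ n), Nat.cast_one]
  have key : ∀ i : ℕ, ∃ g : ℝ → ℝ, i < n →
      (ContinuousOn g (Icc 0 C) ∧ (∀ c ∈ Icc (0:ℝ) C, g c ∈ Icc (0:ℝ) 1 ∧ h i (g c) = c) ∧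
       ∀ y ∈ Icc (0:ℝ) 1, g (h i y) = y) := by
    intro i
    by_cases hi : i < n
    · obtain ⟨g, hg1, hg2, hg3⟩ := exists_inv (hcont i hi) (hmono i hi)
      rw [h0 i hi, h1 i hi] at hg1 hg2
      exact ⟨g, fun _ => ⟨hg1, hg2, hg3⟩⟩
    · exact ⟨id, fun hi' => absurd hi' hi⟩
  choose g hg using key
  set T : ℝ → ℕ → ℝ := fun c j => gT g h s C c j with hTdef
  set E : ℝ → ℕ → ℝ := fun c j => gE g h s C c j with hEdef
  have hTE : ∀ c j, E c j = g j (min (h j (T c j) + c) C) := fun _ _ => rfl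
  have hTsucc : ∀ c j, T c (j + 1) = min (E c j + s) 1 := fun _ _ => rfl
  have hT0 : ∀ c, T c 0 = 0 := fun _ => rfl
  have hml : ∀ i, i < n → ∀ t ∈ Icc (0:ℝ) 1, 0 ≤ h i t ∧ h i t ≤ C := by
    intro i hi t ht
    constructor
    · rw [← h0 i hi]; exact (hmono i hi).monotoneOn mem0 ht ht.1
    · rw [← h1 i hi]; exact (hmono i hi).monotoneOn ht mem1 ht.2
  have hA : ∀ c ∈ Icc (0:ℝ) C, ∀ i, i < n → ∀ t ∈ Icc (0:ℝ) 1,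
      min (h i t + c) C ∈ Icc (0:ℝ) C := by
    intro c hc i hi t ht
    constructor
    · exact le_min (by linarith [(hml i hi t ht).1, hc.1]) hC.le
    · exact min_le_right _ _
  have hE : ∀ c ∈ Icc (0:ℝ) C, ∀ i, i < n → T c i ∈ Icc (0:ℝ) 1 →
      (E c i ∈ Icc (0:ℝ) 1 ∧ h i (E c i) = min (h i (T c i) + c) C ∧ T c i ≤ E c i) := by
    intro c hc i hi hTmem
    have hAmem := hA c hc i hi _ hTmem
    obtain ⟨hg1, hg2, hg3⟩ := hg i hi
    have hgp := hg2 _ hAmem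
    rw [← hTE] at hgp
    refine ⟨hgp.1, hgp.2, ?_⟩
    have hge : h i (T c i) ≤ h i (E c i) := by
      rw [hgp.2]
      exact le_min (by linarith [hc.1]) ((hml i hi _ hTmem).2)
    exact ((hmono i hi).le_iff_le hTmem hgp.1).1 hge
  have hTmem : ∀ c ∈ Icc (0:ℝ) C, ∀ j, j < n → T c j ∈ Icc (0:ℝ) 1 := by
    intro c hc j
    induction j with
    | zero => intro _; rw [hT0]; exact mem0
    | succ j ih =>
      intro hj1
      have hj : j < n := by omega
      have hEj := hE c hc j hj (ih hj)
      rw [hTsucc]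
      exact ⟨le_min (by linarith [hEj.1.1]) zero_le_one, min_le_right _ _⟩
  have hTcont : ∀ j, j < n → ContinuousOn (fun c => T c j) (Icc 0 C) := by
    intro j
    induction j with
    | zero =>
      intro _
      have : (fun c : ℝ => T c 0) = fun _ => (0:ℝ) := by funext c; exact hT0 c
      rw [this]; exact continuousOn_const
    | succ j ih =>
      intro hj1
      have hj : j < n := by omega
      have hTc := ih hj
      obtain ⟨hg1, hg2, hg3⟩ := hg j hj
      have hinner : ContinuousOn (fun c => min (h j (T c j) + c) C) (Icc 0 C) :=
        (((hcont j hj).comp hTc (fun c hc => hTmem c hc j hj)).add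
          continuousOn_id).inf continuousOn_const
      have hEcont : ContinuousOn (fun c => E c j) (Icc 0 C) := by
        have := hg1.comp hinner (fun c hc => hA c hc j hj _ (hTmem c hc j hj))
        exact this
      have : (fun c => T c (j + 1)) = fun c => min (E c j + s) 1 := by
        funext c; exact hTsucc c j
      rw [this]
      exact (hEcont.add continuousOn_const).inf continuousOn_const
  have hzero : ∀ j, j ≤ n - 1 → T 0 j = (j : ℝ) * s := by
    intro j
    induction j with
    | zero => intro _; rw [hT0]; simp
    | succ j ih =>
      intro hj1
      have hj : j < n := by omega
      have hTj := ih (by omega)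
      have hCmem : (0:ℝ) ∈ Icc (0:ℝ) C := ⟨le_rfl, hC.le⟩
      have hTmemj := hTmem 0 hCmem j hj
      obtain ⟨hg1, hg2, hg3⟩ := hg j hj
      have hEq : E 0 j = T 0 j := by
        rw [hTE, add_zero, min_eq_left (hml j hj _ hTmemj).2]
        exact hg3 _ hTmemj
      have hlt : ((j:ℝ)) * s + s < 1 := by
        have hle : ((j:ℕ) + 1 : ℕ) ≤ n - 1 := hj1
        have : (((j:ℕ) + 1 : ℕ) : ℝ) ≤ ((n - 1 : ℕ) : ℝ) := Nat.cast_le.2 hle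
        rw [hcast] at this
        push_cast at this
        nlinarith
      rw [hTsucc, hEq, hTj, min_eq_left (by linarith)]
      push_cast; ring
  have hCCmem : C ∈ Icc (0:ℝ) C := ⟨hC.le, le_rfl⟩
  have hone : ∀ j, 1 ≤ j → j ≤ n - 1 → T C j = 1 := by
    intro j
    induction j with
    | zero => intro hj _; omega
    | succ j ih =>
      intro _ hj1
      have hj : j < n := by omega
      obtain ⟨hg1, hg2, hg3⟩ := hg j hj
      have hEj : E C j = 1 := by
        rcases Nat.eq_zero_or_pos j with rfl | hjpos
        · rw [hTE, hT0, h0 0 hj, zero_add, min_eq_right le_rfl, ← h1 0 hj]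
          exact hg3 _ mem1
        · rw [hTE, ih hjpos (by omega), h1 j hj,
            min_eq_right (by linarith), ← h1 j hj]
          exact hg3 _ mem1
      rw [hTsucc, hEj, min_eq_right (by linarith)]
  have hn1lt : n - 1 < n := by omega
  set Hf : ℝ → ℝ := fun c => (C - h (n - 1) (T c (n - 1))) - c with hHdef
  have Hcont : ContinuousOn Hf (Icc 0 C) := by
    have h2 : ContinuousOn (fun c : ℝ => h (n - 1) (T c (n - 1))) (Icc 0 C) :=
      (hcont _ hn1lt).comp (hTcont _ hn1lt) (fun c hc => hTmem c hc _ hn1lt)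
    exact (continuousOn_const.sub h2).sub continuousOn_id
  have hH0 : 0 < Hf 0 := by
    have hT0v : T 0 (n - 1) = ((n - 1 : ℕ) : ℝ) * s := hzero _ le_rfl
    have hmemv : ((n - 1 : ℕ) : ℝ) * s ∈ Icc (0:ℝ) 1 := by
      constructor
      · positivity
      · rw [hcast]; linarith
    have hlt : h (n - 1) (((n - 1 : ℕ) : ℝ) * s) < h (n - 1) 1 := by
      apply hmono _ hn1lt hmemv mem1
      rw [hcast]; linarith
    rw [h1 _ hn1lt] at hlt
    simp only [hHdef, hT0v]
    linarith
  have hHC : Hf C < 0 := by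
    have hTv : T C (n - 1) = 1 := hone _ (by omega) le_rfl
    simp only [hHdef, hTv, h1 _ hn1lt]
    linarith
  obtain ⟨c₀, hc₀mem, hHc₀⟩ := intermediate_value_Icc' hC.le Hcont ⟨hHC.le, hH0.le⟩
  have hcap : ∀ j, j ≤ n - 1 → (T c₀ j = 1 ∨
      ∀ l, l < j → (T c₀ (l + 1) = E c₀ l + s ∧ h l (E c₀ l) = h l (T c₀ l) + c₀)) := by
    intro j
    induction j with
    | zero => intro _; right; intro l hl; omega
    | succ j ih =>
      intro hj1
      have hjn : j < n := by omega
      obtain ⟨hg1, hg2, hg3⟩ := hg j hjn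
      have hTmemj := hTmem c₀ hc₀mem j hjn
      rcases ih (by omega) with hOne | hR
      · left
        have hEj : E c₀ j = 1 := by
          rw [hTE, hOne, h1 j hjn, min_eq_right (by linarith [hc₀mem.1]), ← h1 j hjn]
          exact hg3 _ mem1
        rw [hTsucc, hEj, min_eq_right (by linarith)]
      · by_cases hcapv : h j (T c₀ j) + c₀ ≤ C
        · have hEval : h j (E c₀ j) = h j (T c₀ j) + c₀ := by
            rw [(hE c₀ hc₀mem j hjn hTmemj).2.1, min_eq_left hcapv]
          by_cases hgap : E c₀ j + s ≤ 1
          · right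
            intro l hl
            rcases Nat.lt_succ_iff_lt_or_eq.mp hl with hl' | rfl
            · exact hR l hl'
            · exact ⟨by rw [hTsucc, min_eq_left hgap], hEval⟩
          · left
            rw [hTsucc, min_eq_right (by linarith)]
        · left
          have hEj : E c₀ j = 1 := by
            rw [hTE, min_eq_right (le_of_not_ge hcapv), ← h1 j hjn]
            exact hg3 _ mem1
          rw [hTsucc, hEj, min_eq_right (by linarith)]
  rcases hcap (n - 1) le_rfl with hOne | hR
  · exfalso
    have hc0 : c₀ = 0 := by
      simp only [hHdef, hOne, h1 _ hn1lt] at hHc₀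
      linarith
    rw [hc0, hzero (n - 1) le_rfl, hcast] at hOne
    linarith
  · refine ⟨fun j => if j = n then 1 else T c₀ j - s, ⟨?_, ?_, ?_⟩, c₀, ?_⟩
    · show (if 0 = n then (1:ℝ) else T c₀ 0 - s) = -s
      rw [if_neg (by omega : ¬(0 = n)), hT0]; ring
    · simp
    · intro j hj
      by_cases hjn1 : j = n - 1
      · subst hjn1
        show (if n - 1 = n then (1:ℝ) else T c₀ (n - 1) - s) + s ≤
          (if n - 1 + 1 = n then (1:ℝ) else T c₀ (n - 1 + 1) - s)
        rw [if_neg (by omega : ¬(n - 1 = n)), if_pos (by omega : n - 1 + 1 = n)]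
        have := (hTmem c₀ hc₀mem (n - 1) hn1lt).2
        linarith
      · have hjlt : j < n - 1 := by omega
        have hl := hR j hjlt
        show (if j = n then (1:ℝ) else T c₀ j - s) + s ≤
          (if j + 1 = n then (1:ℝ) else T c₀ (j + 1) - s)
        rw [if_neg (by omega : ¬(j = n)), if_neg (by omega : ¬(j + 1 = n)), hl.1]
        have hTle := (hE c₀ hc₀mem j (by omega) (hTmem c₀ hc₀mem j (by omega))).2.2
        linarith
    · intro j hj
      by_cases hjn1 : j = n - 1
      · subst hjn1
        show h (n - 1) (if n - 1 + 1 = n then (1:ℝ) else T c₀ (n - 1 + 1) - s) -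
          h (n - 1) ((if n - 1 = n then (1:ℝ) else T c₀ (n - 1) - s) + s) = c₀
        rw [if_pos (by omega : n - 1 + 1 = n), if_neg (by omega : ¬(n - 1 = n))]
        have he2 : T c₀ (n - 1) - s + s = T c₀ (n - 1) := by ring
        rw [he2, h1 _ hn1lt]
        simp only [hHdef] at hHc₀
        linarith
      · have hjlt : j < n - 1 := by omega
        have hl := hR j hjlt
        show h j (if j + 1 = n then (1:ℝ) else T c₀ (j + 1) - s) -
          h j ((if j = n then (1:ℝ) else T c₀ j - s) + s) = c₀
        rw [if_neg (by omega : ¬(j + 1 = n)), if_neg (by omega : ¬(j = n))]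
        have e1 : T c₀ (j + 1) - s = E c₀ j := by rw [hl.1]; ring
        have e2 : T c₀ j - s + s = T c₀ j := by ring
        rw [e1, e2, hl.2]
        ring

lemma step2 {n : ℕ} (hn : 2 ≤ n) {s : ℝ} (hs : 0 < s) (hsn : ((n:ℝ) - 1) * s < 1)
    (f : Fin n → ℝ → ℝ) (hf0 : ∀ i t, 0 ≤ f i t)
    (hfi : ∀ i, IntervalIntegrable (f i) volume 0 1)
    (hf1 : ∀ i, (∫ t in (0:ℝ)..1, f i t) = 1)
    (π : Equiv.Perm (Fin n)) {ε : ℝ} (hε : 0 < ε) :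
    ∃ x : ℕ → ℝ, isExactCuts n s x ∧ ∃ c, ∀ j : Fin n,
      (∫ t in (x (j:ℕ) + s)..(x ((j:ℕ) + 1)), f (π j) t)
        + ε * (x ((j:ℕ) + 1) - (x (j:ℕ) + s)) = c := by
  have mem0 : (0:ℝ) ∈ Icc (0:ℝ) 1 := left_mem_Icc.2 zero_le_one
  have hint : ∀ (i : Fin n) (a b : ℝ), a ∈ Icc (0:ℝ) 1 → b ∈ Icc (0:ℝ) 1 →
      IntervalIntegrable (f i) volume a b := by
    intro i a b ha hb
    apply (hfi i).mono_set
    calc Set.uIcc a b ⊆ Icc 0 1 := uIcc_subset_Icc ha hb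
      _ = Set.uIcc (0:ℝ) 1 := (uIcc_of_le zero_le_one).symm
  set h : ℕ → ℝ → ℝ := fun j y =>
    if hj : j < n then (∫ t in (0:ℝ)..y, f (π ⟨j, hj⟩) t) + ε * y else y with hhdef
  have hfun : ∀ (j : ℕ) (hj : j < n),
      h j = fun y => (∫ t in (0:ℝ)..y, f (π ⟨j, hj⟩) t) + ε * y := by
    intro j hj; funext y; simp [hhdef, dif_pos hj]
  have h0 : ∀ i, i < n → h i 0 = 0 := by
    intro i hi; rw [hfun i hi]; simp
  have h1 : ∀ i, i < n → h i 1 = 1 + ε := by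
    intro i hi; rw [hfun i hi]; simp [hf1]
  have hcont : ∀ i, i < n → ContinuousOn (h i) (Icc 0 1) := by
    intro i hi
    rw [hfun i hi]
    apply ContinuousOn.add
    · have := intervalIntegral.continuousOn_primitive_interval'
        (hfi (π ⟨i, hi⟩)) (left_mem_uIcc (a := (0:ℝ)) (b := 1))
      rwa [uIcc_of_le zero_le_one] at this
    · exact (continuous_const.mul continuous_id).continuousOn
  have hmono : ∀ i, i < n → StrictMonoOn (h i) (Icc 0 1) := by
    intro i hi
    rw [hfun i hi]
    intro a ha b hb hab
    have hsplit : (∫ t in (0:ℝ)..b, f (π ⟨i, hi⟩) t) - (∫ t in (0:ℝ)..a, f (π ⟨i, hi⟩) t)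
        = ∫ t in a..b, f (π ⟨i, hi⟩) t :=
      intervalIntegral.integral_interval_sub_left (hint _ _ _ mem0 hb) (hint _ _ _ mem0 ha)
    have hnn : 0 ≤ ∫ t in a..b, f (π ⟨i, hi⟩) t :=
      intervalIntegral.integral_nonneg hab.le (fun u _ => hf0 _ u)
    simp only
    nlinarith
  obtain ⟨x, hcuts, c, hvals⟩ := step1 hn hs hsn (by positivity : (0:ℝ) < 1 + ε)
    h hcont hmono h0 h1
  refine ⟨x, hcuts, c, ?_⟩
  intro j
  have hj : (j : ℕ) < n := j.2
  have hv := hvals (j : ℕ) hj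
  rw [hfun _ hj] at hv
  have hje : (⟨(j : ℕ), hj⟩ : Fin n) = j := Fin.eta j hj
  rw [hje] at hv
  obtain ⟨p1, p2, p3⟩ := cuts_pieces hs hcuts (j : ℕ) hj
  have hmA : x (j : ℕ) + s ∈ Icc (0:ℝ) 1 := ⟨p1, by linarith⟩
  have hmB : x ((j : ℕ) + 1) ∈ Icc (0:ℝ) 1 := ⟨by linarith, p3⟩
  have hsplit : (∫ t in (0:ℝ)..(x ((j:ℕ) + 1)), f (π j) t)
      - (∫ t in (0:ℝ)..(x (j:ℕ) + s), f (π j) t)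
      = ∫ t in (x (j:ℕ) + s)..(x ((j:ℕ) + 1)), f (π j) t :=
    intervalIntegral.integral_interval_sub_left (hint _ _ _ mem0 hmB) (hint _ _ _ mem0 hmA)
  simp only at hv
  linarith [hv, hsplit]

end Stmt9Aux


open Stmt9Aux Filter Topology Set

/-- For any ordering `π` of the agents, there exists an exactly `s`-separated allocation of
`[0,1]` into `n` intervals, assigned left to right according to `π` (agent `π j` gets the
`j`-th piece `[x j + s, x (j+1)]`), that is equitable: all agents receive equal value. -/
theorem stmt_9 (n : ℕ) (hn : 2 ≤ n) (s : ℝ) (hs : 0 < s) (hs' : s < 1 / ((n : ℝ) - 1))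
    (f : Fin n → ℝ → ℝ) (hf0 : ∀ i t, 0 ≤ f i t)
    (hfi : ∀ i, IntervalIntegrable (f i) volume 0 1)
    (hf1 : ∀ i, (∫ t in (0:ℝ)..1, f i t) = 1)
    (π : Equiv.Perm (Fin n)) :
    ∃ x : ℕ → ℝ, isExactCuts n s x ∧
      ∀ j j' : Fin n,
        (∫ t in (x (j : ℕ) + s)..(x ((j : ℕ) + 1)), f (π j) t) =
          ∫ t in (x (j' : ℕ) + s)..(x ((j' : ℕ) + 1)), f (π j') t := by
  have mem0 : (0:ℝ) ∈ Icc (0:ℝ) 1 := left_mem_Icc.2 zero_le_one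
  have hn1pos : (0:ℝ) < (n:ℝ) - 1 := by
    have : (2:ℝ) ≤ (n:ℝ) := by exact_mod_cast hn
    linarith
  have hsn : ((n:ℝ) - 1) * s < 1 := by
    have := (lt_div_iff₀ hn1pos).1 hs'
    linarith
  have hseq : ∀ k : ℕ, ∃ x : ℕ → ℝ, isExactCuts n s x ∧ ∃ c, ∀ j : Fin n,
      (∫ t in (x (j:ℕ) + s)..(x ((j:ℕ) + 1)), f (π j) t)
        + (1 / ((k:ℝ) + 1)) * (x ((j:ℕ) + 1) - (x (j:ℕ) + s)) = c :=
    fun k => step2 hn hs hsn f hf0 hfi hf1 π (by positivity)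
  choose X hXcut c hXval using hseq
  have hint : ∀ (i : Fin n) (a b : ℝ), a ∈ Icc (0:ℝ) 1 → b ∈ Icc (0:ℝ) 1 →
      IntervalIntegrable (f i) volume a b := by
    intro i a b ha hb
    apply (hfi i).mono_set
    calc Set.uIcc a b ⊆ Icc 0 1 := uIcc_subset_Icc ha hb
      _ = Set.uIcc (0:ℝ) 1 := (uIcc_of_le zero_le_one).symm
  -- compactness
  have hYmem : ∀ k, (fun j : Fin (n + 1) => X k (j : ℕ)) ∈
      Icc (fun _ : Fin (n + 1) => -s) (fun _ : Fin (n + 1) => (1:ℝ)) := by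
    intro k
    rw [Set.mem_Icc]
    constructor
    · intro j; exact (cuts_coord hs (hXcut k) (j : ℕ) (by omega)).1
    · intro j; exact (cuts_coord hs (hXcut k) (j : ℕ) (by omega)).2
  obtain ⟨a, hamem, φ, hφ, hconv⟩ := isCompact_Icc.tendsto_subseq hYmem
  have hcoord : ∀ (j : ℕ) (hj : j ≤ n), Tendsto (fun k => X (φ k) j) atTop
      (𝓝 (a ⟨j, by omega⟩)) := by
    intro j hj
    have := tendsto_pi_nhds.1 hconv ⟨j, by omega⟩
    simpa [Function.comp] using this
  set x : ℕ → ℝ := fun j => if hj : j ≤ n then a ⟨j, by omega⟩ else 1 with hxdef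
  have hx : ∀ (j : ℕ), j ≤ n → Tendsto (fun k => X (φ k) j) atTop (𝓝 (x j)) := by
    intro j hj
    have hxj : x j = a ⟨j, by omega⟩ := by rw [hxdef]; simp [dif_pos hj]
    rw [hxj]
    exact hcoord j hj
  have hcuts : isExactCuts n s x := by
    refine ⟨?_, ?_, ?_⟩
    · have h1 : (fun k => X (φ k) 0) = fun _ => -s := funext fun k => (hXcut (φ k)).1
      exact tendsto_nhds_unique (hx 0 (by omega)) (h1 ▸ tendsto_const_nhds)
    · have h1 : (fun k => X (φ k) n) = fun _ => (1:ℝ) := funext fun k => (hXcut (φ k)).2.1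
      exact tendsto_nhds_unique (hx n le_rfl) (h1 ▸ tendsto_const_nhds)
    · intro j hj
      exact le_of_tendsto_of_tendsto' ((hx j (by omega)).add_const s)
        (hx (j + 1) (by omega)) (fun k => (hXcut (φ k)).2.2 j hj)
  refine ⟨x, hcuts, ?_⟩
  have hG : ∀ i : Fin n, ContinuousOn (fun y => ∫ t in (0:ℝ)..y, f i t) (Icc 0 1) := by
    intro i
    have := intervalIntegral.continuousOn_primitive_interval'
      (hfi i) (left_mem_uIcc (a := (0:ℝ)) (b := 1))
    rwa [uIcc_of_le zero_le_one] at this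
  have hεlim : Tendsto (fun k => (1:ℝ) / ((φ k : ℝ) + 1)) atTop (𝓝 0) :=
    tendsto_one_div_add_atTop_nhds_zero_nat.comp hφ.tendsto_atTop
  have hlim : ∀ j : Fin n, Tendsto
      (fun k => (∫ t in (X (φ k) (j:ℕ) + s)..(X (φ k) ((j:ℕ) + 1)), f (π j) t)
        + (1 / ((φ k : ℝ) + 1)) * (X (φ k) ((j:ℕ) + 1) - (X (φ k) (j:ℕ) + s)))
      atTop (𝓝 (∫ t in (x (j:ℕ) + s)..(x ((j:ℕ) + 1)), f (π j) t)) := by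
    intro j
    have hjn : (j:ℕ) < n := j.2
    have hmemA : ∀ k, X (φ k) (j:ℕ) + s ∈ Icc (0:ℝ) 1 := by
      intro k
      obtain ⟨p1, p2, p3⟩ := cuts_pieces hs (hXcut (φ k)) (j:ℕ) hjn
      exact ⟨p1, by linarith⟩
    have hmemB : ∀ k, X (φ k) ((j:ℕ) + 1) ∈ Icc (0:ℝ) 1 := by
      intro k
      obtain ⟨p1, p2, p3⟩ := cuts_pieces hs (hXcut (φ k)) (j:ℕ) hjn
      exact ⟨by linarith, p3⟩
    obtain ⟨q1, q2, q3⟩ := cuts_pieces hs hcuts (j:ℕ) hjn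
    have hmemA' : x (j:ℕ) + s ∈ Icc (0:ℝ) 1 := ⟨q1, by linarith⟩
    have hmemB' : x ((j:ℕ) + 1) ∈ Icc (0:ℝ) 1 := ⟨by linarith, q3⟩
    have hAconv : Tendsto (fun k => X (φ k) (j:ℕ) + s) atTop (𝓝 (x (j:ℕ) + s)) :=
      (hx (j:ℕ) (by omega)).add_const s
    have hBconv : Tendsto (fun k => X (φ k) ((j:ℕ) + 1)) atTop (𝓝 (x ((j:ℕ) + 1))) :=
      hx ((j:ℕ) + 1) (by omega)
    have tendG : ∀ (b : ℕ → ℝ) (b' : ℝ), (∀ k, b k ∈ Icc (0:ℝ) 1) → b' ∈ Icc (0:ℝ) 1 →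
        Tendsto b atTop (𝓝 b') →
        Tendsto (fun k => ∫ t in (0:ℝ)..(b k), f (π j) t) atTop
          (𝓝 (∫ t in (0:ℝ)..b', f (π j) t)) := by
      intro b b' hbk hb' hb
      have hcw := (hG (π j)).continuousWithinAt hb'
      have hbw : Tendsto b atTop (𝓝[Icc (0:ℝ) 1] b') :=
        tendsto_nhdsWithin_iff.2 ⟨hb, Eventually.of_forall hbk⟩
      have := hcw.tendsto.comp hbw
      exact this
    have h3 := ((tendG _ _ hmemB hmemB' hBconv).sub (tendG _ _ hmemA hmemA' hAconv)).add
      (hεlim.mul (hBconv.sub hAconv))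
    have hval : (∫ t in (0:ℝ)..(x ((j:ℕ) + 1)), f (π j) t)
        - (∫ t in (0:ℝ)..(x (j:ℕ) + s), f (π j) t)
        + 0 * (x ((j:ℕ) + 1) - (x (j:ℕ) + s))
        = ∫ t in (x (j:ℕ) + s)..(x ((j:ℕ) + 1)), f (π j) t := by
      rw [intervalIntegral.integral_interval_sub_left (hint _ _ _ mem0 hmemB')
        (hint _ _ _ mem0 hmemA')]
      ring
    rw [hval] at h3
    apply h3.congr
    intro k
    rw [intervalIntegral.integral_interval_sub_left (hint _ _ _ mem0 (hmemB k))
      (hint _ _ _ mem0 (hmemA k))]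
  intro j j'
  have heq : (fun k => (∫ t in (X (φ k) (j:ℕ) + s)..(X (φ k) ((j:ℕ) + 1)), f (π j) t)
        + (1 / ((φ k : ℝ) + 1)) * (X (φ k) ((j:ℕ) + 1) - (X (φ k) (j:ℕ) + s)))
      = (fun k => (∫ t in (X (φ k) (j':ℕ) + s)..(X (φ k) ((j':ℕ) + 1)), f (π j') t)
        + (1 / ((φ k : ℝ) + 1)) * (X (φ k) ((j':ℕ) + 1) - (X (φ k) (j':ℕ) + s))) :=
    funext fun k => (hXval (φ k) j).trans (hXval (φ k) j').symm
  exact tendsto_nhds_unique (hlim j) (heq ▸ hlim j')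
end

section
/- Let v be a valuation on the pie (circle of circumference 1) given by a nonnegative integrable density with total value 1, let n ≥ 2 and s ∈ (0, 1/n). Then MMS^{n,cake} ≥ MMS^{n+1,pie}, where MMS^{n+1,pie} is the 1-out-of-(n+1) maximin share of v on the pie with separation s, and MMS^{n,cake} is the 1-out-of-n maximin share (with separation s) of v restricted to the cake obtained by cutting the pie at point 0 and removing the arc [0, s]. -/
open MeasureTheory

/-- Value of the arc from `x` clockwise to `y` on the pie (circle of circumference 1), for the
valuation given by the density `f` on `[0,1]` extended periodically. -/
noncomputable def pieVal (f : ℝ → ℝ) (x y : ℝ) : ℝ := ∫ t in x..y, f (Int.fract t)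

/-- The 1-out-of-`k` maximin share on the pie with separation `s`. -/
noncomputable def MMSpie (f : ℝ → ℝ) (k : ℕ) (s : ℝ) : ℝ :=
  sSup {m | ∃ a b : ℕ → ℝ, isPiePartition k s a b ∧
    m = ⨅ j : Fin k, pieVal f (a (j : ℕ)) (b (j : ℕ))}

/-- The 1-out-of-`n` maximin share (separation `s`) on the cake `[s,1]` obtained by cutting
the pie at `0` and removing the arc `[0,s]`. -/
noncomputable def MMScakeOnTail (f : ℝ → ℝ) (n : ℕ) (s : ℝ) : ℝ :=
  sSup {m | ∃ a b : ℕ → ℝ,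
    s ≤ a 0 ∧ (∀ j, j < n → a j ≤ b j) ∧ (∀ j, j + 1 < n → b j + s ≤ a (j + 1)) ∧
      b (n - 1) ≤ 1 ∧ m = ⨅ j : Fin n, ∫ t in (a (j : ℕ))..(b (j : ℕ)), f t}

lemma pieVal_shift (f : ℝ → ℝ) (x y : ℝ) (k : ℤ) :
    pieVal f (x + k) (y + k) = pieVal f x y := by
  unfold pieVal
  rw [← intervalIntegral.integral_comp_add_right (a := x) (b := y) (fun t => f (Int.fract t)) (k : ℝ)]
  simp [Int.fract_add_intCast]

lemma ae_ne_one : ∀ᵐ t : ℝ, t ≠ 1 := by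
  rw [ae_iff]; simp

lemma fract_eq_of_mem (x y t : ℝ) (hx : 0 ≤ x) (hx1 : x ≤ 1) (hy : 0 ≤ y) (hy1 : y ≤ 1)
    (ht : t ≠ 1) (hmem : t ∈ Set.uIoc x y) : Int.fract t = t := by
  rw [Set.mem_uIoc] at hmem
  apply Int.fract_eq_self.mpr
  constructor
  · rcases hmem with ⟨h1, _⟩ | ⟨h1, _⟩ <;> linarith
  · rcases hmem with ⟨_, h2⟩ | ⟨_, h2⟩ <;>
    · rcases lt_or_eq_of_le (le_trans h2 (by assumption)) with h | h
      · exact h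
      · exact absurd h ht

lemma pieVal_congr (f : ℝ → ℝ) (x y : ℝ) (hx : 0 ≤ x) (hx1 : x ≤ 1) (hy : 0 ≤ y) (hy1 : y ≤ 1) :
    pieVal f x y = ∫ t in x..y, f t := by
  unfold pieVal
  apply intervalIntegral.integral_congr_ae
  filter_upwards [ae_ne_one] with t ht hmem
  rw [fract_eq_of_mem x y t hx hx1 hy hy1 ht hmem]

lemma intervalIntegrable_of_unit (f : ℝ → ℝ)
    (hfi : ∀ x y : ℝ, IntervalIntegrable (fun t => f (Int.fract t)) volume x y)
    (x y : ℝ) (hx : 0 ≤ x) (hx1 : x ≤ 1) (hy : 0 ≤ y) (hy1 : y ≤ 1) :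
    IntervalIntegrable f volume x y := by
  have h := hfi x y
  rw [intervalIntegrable_iff] at h ⊢
  apply h.congr_fun_ae
  filter_upwards [ae_restrict_of_ae ae_ne_one, ae_restrict_mem measurableSet_uIoc] with t ht hmem
  rw [fract_eq_of_mem x y t hx hx1 hy hy1 ht hmem]

lemma chain_mono (N : ℕ) (s : ℝ) (hs : 0 < s) (c d : ℕ → ℝ)
    (hcd : ∀ j, j < N → c j ≤ d j) (hgap : ∀ j, j + 1 < N → d j + s ≤ c (j + 1)) :
    ∀ i j, i ≤ j → j < N → c i ≤ c j ∧ d i ≤ d j := by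
  intro i j hij hj
  induction j with
  | zero =>
    obtain rfl : i = 0 := Nat.le_zero.mp hij
    exact ⟨le_refl _, le_refl _⟩
  | succ k ih =>
    rcases Nat.lt_or_ge i (k+1) with h | h
    · have hk : i ≤ k := by omega
      have h4 := ih hk (by omega)
      have h1 : d k + s ≤ c (k+1) := hgap k hj
      have h2 : c (k+1) ≤ d (k+1) := hcd _ hj
      have h3 : c k ≤ d k := hcd k (by omega)
      exact ⟨by linarith [h4.1, h4.2], by linarith [h4.2]⟩
    · obtain rfl : i = k + 1 := by omega
      exact ⟨le_refl _, le_refl _⟩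

lemma cake_mem (f : ℝ → ℝ) (n : ℕ) (hn : 1 ≤ n) (s : ℝ) (m : ℝ) (e g : ℕ → ℝ)
    (hbdd : BddAbove {m | ∃ a b : ℕ → ℝ,
      s ≤ a 0 ∧ (∀ j, j < n → a j ≤ b j) ∧ (∀ j, j + 1 < n → b j + s ≤ a (j + 1)) ∧
        b (n - 1) ≤ 1 ∧ m = ⨅ j : Fin n, ∫ t in (a (j : ℕ))..(b (j : ℕ)), f t})
    (h0 : s ≤ e 0) (hab : ∀ j, j < n → e j ≤ g j)
    (hgap : ∀ j, j + 1 < n → g j + s ≤ e (j + 1)) (hend : g (n - 1) ≤ 1)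
    (hm : ∀ j, j < n → m ≤ ∫ t in (e j)..(g j), f t) :
    m ≤ MMScakeOnTail f n s := by
  haveI : Nonempty (Fin n) := ⟨⟨0, hn⟩⟩
  have hmem : (⨅ j : Fin n, ∫ t in (e (j:ℕ))..(g (j:ℕ)), f t) ∈ {m | ∃ a b : ℕ → ℝ,
      s ≤ a 0 ∧ (∀ j, j < n → a j ≤ b j) ∧ (∀ j, j + 1 < n → b j + s ≤ a (j + 1)) ∧
        b (n - 1) ≤ 1 ∧ m = ⨅ j : Fin n, ∫ t in (a (j : ℕ))..(b (j : ℕ)), f t} :=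
    ⟨e, g, h0, hab, hgap, hend, rfl⟩
  calc m ≤ ⨅ j : Fin n, ∫ t in (e (j:ℕ))..(g (j:ℕ)), f t := le_ciInf fun j => hm j j.2
    _ ≤ MMScakeOnTail f n s := le_csSup hbdd hmem

lemma chain_reduce (f : ℝ → ℝ) (n : ℕ) (hn : 1 ≤ n) (s : ℝ) (hs : 0 < s) (m : ℝ) (e g : ℕ → ℝ)
    (hbdd : BddAbove {m | ∃ a b : ℕ → ℝ,
      s ≤ a 0 ∧ (∀ j, j < n → a j ≤ b j) ∧ (∀ j, j + 1 < n → b j + s ≤ a (j + 1)) ∧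
        b (n - 1) ≤ 1 ∧ m = ⨅ j : Fin n, ∫ t in (a (j : ℕ))..(b (j : ℕ)), f t})
    (h0 : 0 ≤ e 0) (hab : ∀ j, j < n + 1 → e j ≤ g j)
    (hgap : ∀ j, j + 1 < n + 1 → g j + s ≤ e (j + 1)) (hend : g n ≤ 1)
    (hm : ∀ j, j < n + 1 → m ≤ ∫ t in (e j)..(g j), f t) :
    m ≤ MMScakeOnTail f n s := by
  by_cases hc : s ≤ e 0
  · apply cake_mem f n hn s m e g hbdd hc (fun j hj => hab j (by omega))
      (fun j hj => hgap j (by omega)) ?_ (fun j hj => hm j (by omega))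
    have h1 := hgap (n-1) (by omega)
    have h2 := hab n (by omega)
    have h3 : n - 1 + 1 = n := by omega
    rw [h3] at h1
    linarith
  · apply cake_mem f n hn s m (fun j => e (j+1)) (fun j => g (j+1)) hbdd ?_
      (fun j hj => hab (j+1) (by omega)) (fun j hj => hgap (j+1) (by omega)) ?_
      (fun j hj => hm (j+1) (by omega))
    · have h1 := hgap 0 (by omega)
      have h2 := hab 0 (by omega)
      linarith
    · have h3 : n - 1 + 1 = n := by omega
      rw [h3]
      exact hend

/-- Cutting the pie at `0` and removing the arc `[0,s]` loses at most one piece of a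
1-out-of-`(n+1)` maximin partition of the pie: `MMS^{n,cake} ≥ MMS^{n+1,pie}`. -/
theorem stmt_11 (n : ℕ) (hn : 2 ≤ n) (s : ℝ) (hs : 0 < s) (hs' : s < 1 / (n : ℝ))
    (f : ℝ → ℝ) (hf0 : ∀ t, 0 ≤ f t)
    (hfi : ∀ x y : ℝ, IntervalIntegrable (fun t => f (Int.fract t)) volume x y)
    (hf1 : pieVal f 0 1 = 1) :
    MMSpie f (n + 1) s ≤ MMScakeOnTail f n s := by
  classical
  have hnR : (0:ℝ) < (n:ℝ) := by
    have : 0 < n := by omega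
    exact_mod_cast this
  have hsn : s * (n:ℝ) < 1 := by
    rw [lt_div_iff₀ hnR] at hs'
    exact hs'
  have hint1 : ∫ t in (0:ℝ)..1, f t = 1 := by
    rw [← pieVal_congr f 0 1 le_rfl zero_le_one zero_le_one le_rfl]
    exact hf1
  have hbdd : BddAbove {m | ∃ a b : ℕ → ℝ,
      s ≤ a 0 ∧ (∀ j, j < n → a j ≤ b j) ∧ (∀ j, j + 1 < n → b j + s ≤ a (j + 1)) ∧
        b (n - 1) ≤ 1 ∧ m = ⨅ j : Fin n, ∫ t in (a (j : ℕ))..(b (j : ℕ)), f t} := by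
    refine ⟨1, ?_⟩
    rintro m ⟨a, b, ha0, hab, hgap, hend, rfl⟩
    haveI : Nonempty (Fin n) := ⟨⟨0, by omega⟩⟩
    have hmono := chain_mono n s hs a b hab hgap
    have hb0 : b 0 ≤ 1 := le_trans (hmono 0 (n-1) (by omega) (by omega)).2 hend
    have ha0' : (0:ℝ) ≤ a 0 := le_trans hs.le ha0
    have h1 : (⨅ j : Fin n, ∫ t in (a (j:ℕ))..(b (j:ℕ)), f t) ≤ ∫ t in (a 0)..(b 0), f t := by
      have := ciInf_le (Set.Finite.bddBelow
        (Set.finite_range fun j : Fin n => ∫ t in (a (j:ℕ))..(b (j:ℕ)), f t))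
        (⟨0, by omega⟩ : Fin n)
      simpa using this
    have h2 : ∫ t in (a 0)..(b 0), f t ≤ ∫ t in (0:ℝ)..1, f t := by
      apply intervalIntegral.integral_mono_interval ha0' (hab 0 (by omega)) hb0
      · filter_upwards with t using hf0 t
      · exact intervalIntegrable_of_unit f hfi 0 1 le_rfl zero_le_one zero_le_one le_rfl
    linarith
  have h0cake : (0:ℝ) ≤ MMScakeOnTail f n s := by
    haveI : Nonempty (Fin n) := ⟨⟨0, by omega⟩⟩
    apply le_csSup hbdd
    refine ⟨fun j => s * (j + 1), fun j => s * (j + 1), by norm_num, fun j hj => le_rfl,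
      fun j hj => le_of_eq (by push_cast; ring), ?_, ?_⟩
    · have h3 : ((n-1:ℕ):ℝ) + 1 = (n:ℝ) := by
        push_cast [Nat.cast_sub (by omega : 1 ≤ n)]
        ring
      simp only []
      rw [h3]
      linarith
    · simp [intervalIntegral.integral_same]
  rw [MMSpie]
  apply Real.sSup_le _ h0cake
  rintro m ⟨a, b, ⟨hab, hgap, hwrap⟩, hmeq⟩
  haveI : Nonempty (Fin (n+1)) := ⟨⟨0, by omega⟩⟩
  simp only [Nat.add_sub_cancel] at hwrap
  set c : ℕ → ℝ := fun j => a j - (⌊a 0⌋ : ℝ) with hc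
  set d : ℕ → ℝ := fun j => b j - (⌊a 0⌋ : ℝ) with hd
  have hfr : c 0 = Int.fract (a 0) := by
    rw [hc]
    exact Int.self_sub_floor (a 0)
  have hc0 : 0 ≤ c 0 := by
    rw [hfr]; exact Int.fract_nonneg (a 0)
  have hc1 : c 0 < 1 := by
    rw [hfr]; exact Int.fract_lt_one (a 0)
  have hcd : ∀ j, j < n + 1 → c j ≤ d j := fun j hj => by
    simp only [hc, hd]; linarith [hab j hj]
  have hgap' : ∀ j, j + 1 < n + 1 → d j + s ≤ c (j + 1) := fun j hj => by
    simp only [hc, hd]; linarith [hgap j hj]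
  have hwrap' : d n + s ≤ c 0 + 1 := by
    simp only [hc, hd]; linarith
  have hmono := chain_mono (n+1) s hs c d hcd hgap'
  have hdub : ∀ j, j < n + 1 → d j ≤ c 0 + 1 - s := fun j hj => by
    linarith [(hmono j n (by omega) (by omega)).2, hwrap']
  have hval : ∀ j, j < n + 1 → m ≤ pieVal f (c j) (d j) := by
    intro j hj
    have h1 : m ≤ pieVal f (a j) (b j) := by
      rw [hmeq]
      have := ciInf_le (Set.Finite.bddBelow
        (Set.finite_range fun j : Fin (n+1) => pieVal f (a (j:ℕ)) (b (j:ℕ))))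
        (⟨j, hj⟩ : Fin (n+1))
      simpa using this
    have h2 := pieVal_shift f (c j) (d j) ⌊a 0⌋
    have e1 : c j + (⌊a 0⌋:ℝ) = a j := by simp [hc]
    have e2 : d j + (⌊a 0⌋:ℝ) = b j := by simp [hd]
    rw [e1, e2] at h2
    linarith [h2.le, h2.ge]
  have hval2 : ∀ k, k < n + 1 → 0 ≤ c k → d k ≤ 1 → m ≤ ∫ t in (c k)..(d k), f t := by
    intro k hk h1 h2
    rw [← pieVal_congr f (c k) (d k) h1 (le_trans (hcd k hk) h2) (le_trans h1 (hcd k hk)) h2]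
    exact hval k hk
  have hval3 : ∀ k, k < n + 1 → 1 ≤ c k → m ≤ ∫ t in (c k - 1)..(d k - 1), f t := by
    intro k hk h1
    have hck : c k ≤ d k := hcd k hk
    have hdk : d k ≤ c 0 + 1 - s := hdub k hk
    have b1 : 0 ≤ c k - 1 := by linarith
    have b2 : c k - 1 ≤ 1 := by linarith
    have b3 : 0 ≤ d k - 1 := by linarith
    have b4 : d k - 1 ≤ 1 := by linarith
    rw [← pieVal_congr f (c k - 1) (d k - 1) b1 b2 b3 b4]
    have h2 := pieVal_shift f (c k - 1) (d k - 1) 1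
    simp only [Int.cast_one, sub_add_cancel] at h2
    rw [← h2]
    exact hval k hk
  by_cases hex : ∃ j, j < n + 1 ∧ 1 ≤ c j
  · -- some arc starts at position ≥ 1 : rotate the partition
    obtain ⟨hj0lt, hj0ge⟩ := Nat.find_spec hex
    set j0 := Nat.find hex with hj0def
    have hj0pos : 1 ≤ j0 := by
      by_contra h
      have h0 : j0 = 0 := by omega
      rw [h0] at hj0ge
      linarith
    have hcub : ∀ j, j < j0 → c j < 1 := by
      intro j hj
      have h := Nat.find_min hex hj
      push_neg at h
      exact h (by omega)
    have hcge : ∀ i, j0 ≤ i → i < n + 1 → 1 ≤ c i := fun i h1 h2 =>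
      le_trans hj0ge (hmono j0 i h1 h2).1
    set q := n + 1 - j0 with hqdef
    set e : ℕ → ℝ := fun i => if i < q then c (j0 + i) - 1 else c (i - q) with hE
    set g : ℕ → ℝ := fun i => if i < q then d (j0 + i) - 1 else d (i - q) with hG
    have heg : ∀ i, i < n + 1 → e i ≤ g i := by
      intro i hi
      simp only [hE, hG]
      split_ifs with h
      · linarith [hcd (j0 + i) (by omega)]
      · exact hcd (i - q) (by omega)
    have hgapE : ∀ i, i + 1 < n + 1 → g i + s ≤ e (i + 1) := by
      intro i hi
      simp only [hE, hG]
      split_ifs with h1 h2 h2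
      · have h3 : j0 + (i + 1) = (j0 + i) + 1 := by omega
        rw [h3]
        linarith [hgap' (j0 + i) (by omega)]
      · have h3 : j0 + i = n := by omega
        have h4 : i + 1 - q = 0 := by omega
        rw [h3, h4]
        linarith [hwrap']
      · omega
      · have h3 : i + 1 - q = (i - q) + 1 := by omega
        rw [h3]
        exact hgap' (i - q) (by omega)
    have hE0 : 0 ≤ e 0 := by
      simp only [hE]
      rw [if_pos (by omega : 0 < q)]
      simp only [Nat.add_zero]
      linarith [hcge j0 le_rfl hj0lt]
    have hvalE : ∀ i, i < n + 1 → (i < n ∨ d (j0 - 1) ≤ 1) → m ≤ ∫ t in (e i)..(g i), f t := by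
      intro i hi hcond
      simp only [hE, hG]
      by_cases h : i < q
      · rw [if_pos h, if_pos h]
        exact hval3 (j0 + i) (by omega) (hcge (j0 + i) (by omega) (by omega))
      · rw [if_neg h, if_neg h]
        apply hval2 (i - q) (by omega) (by linarith [(hmono 0 (i - q) (by omega) (by omega)).1])
        rcases hcond with h1 | h1
        · have h2 := hgap' (i - q) (by omega)
          have h3 := hcub (i - q + 1) (by omega)
          linarith
        · linarith [(hmono (i - q) (j0 - 1) (by omega) (by omega)).2]
    by_cases hlast : d (j0 - 1) ≤ 1
    · apply chain_reduce f n (by omega) s hs m e g hbdd hE0 heg hgapE ?_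
        (fun j hj => hvalE j hj (Or.inr hlast))
      simp only [hG]
      rw [if_neg (by omega : ¬ n < q), show n - q = j0 - 1 from by omega]
      exact hlast
    · push_neg at hlast
      apply cake_mem f n (by omega) s m e g hbdd ?_ (fun j hj => heg j (by omega))
        (fun j hj => hgapE j (by omega)) ?_
        (fun j hj => hvalE j (by omega) (Or.inl (by omega)))
      · simp only [hE]
        rw [if_pos (by omega : 0 < q)]
        simp only [Nat.add_zero]
        have h1 := hgap' (j0 - 1) (by omega)
        rw [show j0 - 1 + 1 = j0 from by omega] at h1
        linarith
      · simp only [hG]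
        by_cases h : n - 1 < q
        · rw [if_pos h, show j0 + (n - 1) = n from by omega]
          linarith [hdub n (by omega)]
        · rw [if_neg h]
          have h2 := hgap' (n - 1 - q) (by omega)
          have h3 := hcub (n - 1 - q + 1) (by omega)
          linarith
  · -- no arc starts at position ≥ 1
    push_neg at hex
    by_cases hdn : d n ≤ 1
    · exact chain_reduce f n (by omega) s hs m c d hbdd hc0 hcd hgap' hdn
        (fun j hj => hval2 j hj (by linarith [(hmono 0 j (by omega) hj).1])
          (by linarith [(hmono j n (by omega) (by omega)).2]))
    · push_neg at hdn
      apply cake_mem f n (by omega) s m c d hbdd ?_ (fun j hj => hcd j (by omega))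
        (fun j hj => hgap' j (by omega)) ?_ ?_
      · linarith [hwrap']
      · have h1 := hgap' (n-1) (by omega)
        rw [show n - 1 + 1 = n from by omega] at h1
        linarith [hex n (by omega)]
      · intro j hj
        apply hval2 j (by omega) (by linarith [(hmono 0 j (by omega) (by omega)).1]) ?_
        have h1 := hgap' (n-1) (by omega)
        rw [show n - 1 + 1 = n from by omega] at h1
        have h4 := (hmono j (n-1) (by omega) (by omega)).2
        linarith [hex n (by omega)]
end

section
/- Let v be a valuation on the pie (circle of circumference 1) given by a nonnegative integrable density with total value 1, let n ≥ 2 and s ∈ (0, 1/(n+1)). Consider any exactly s-separated partition of the pie into n arcs (all n gaps have length exactly s). Then at least one of the n arcs has value at least MMS^{n+1,s}, the 1-out-of-(n+1) maximin share of v on the pie with separation s. -/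
open MeasureTheory

/-- An exactly `s`-separated partition of the pie into `k` arcs: all `k` gaps have length
exactly `s`. -/
def isExactPiePartition (k : ℕ) (s : ℝ) (a b : ℕ → ℝ) : Prop :=
  (∀ j, j < k → a j ≤ b j) ∧ (∀ j, j + 1 < k → b j + s = a (j + 1)) ∧
    b (k - 1) + s = a 0 + 1

lemma pieVal_add_int (f : ℝ → ℝ) (k : ℤ) (x y : ℝ) :
    pieVal f (x + k) (y + k) = pieVal f x y := by
  unfold pieVal
  have h : (∫ t in x..y, f (Int.fract (t + (k : ℝ)))) =
      ∫ t in x + (k : ℝ)..y + (k : ℝ), f (Int.fract t) :=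
    intervalIntegral.integral_comp_add_right (fun t => f (Int.fract t)) (k : ℝ)
  rw [← h]
  simp [Int.fract_add_intCast]

lemma cake_lemma (n : ℕ) (s : ℝ) (α β p q : ℕ → ℝ)
    (hB : ∀ j, j + 1 < n → β j + s = α (j + 1))
    (h1 : α 0 ≤ p 0)
    (h3 : ∀ i, i + 1 < n → q i + s ≤ p (i + 1))
    (h4 : q (n - 1) ≤ β (n - 1)) (hn : 1 ≤ n) :
    ∃ i < n, α i ≤ p i ∧ q i ≤ β i := by
  have key : ∀ d i, i + d + 1 = n → α i ≤ p i → ∃ k < n, α k ≤ p k ∧ q k ≤ β k := by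
    intro d
    induction d with
    | zero =>
      intro i hi h
      have : i = n - 1 := by omega
      subst this
      exact ⟨n - 1, by omega, h, h4⟩
    | succ d ih =>
      intro i hi h
      by_cases hq : q i ≤ β i
      · exact ⟨i, by omega, h, hq⟩
      · refine ih (i + 1) (by omega) ?_
        have hb := hB i (by omega)
        have hp := h3 i (by omega)
        push_neg at hq
        linarith
  exact key (n - 1) 0 (by omega) h1

set_option maxHeartbeats 1000000 in
/-- In any exactly `s`-separated partition of the pie into `n` arcs, at least one arc has
value at least the 1-out-of-`(n+1)` maximin share. -/
theorem stmt_12 (n : ℕ) (hn : 2 ≤ n) (s : ℝ) (hs : 0 < s) (hs' : s < 1 / ((n : ℝ) + 1))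
    (f : ℝ → ℝ) (hf0 : ∀ t, 0 ≤ f t)
    (hfi : ∀ x y : ℝ, IntervalIntegrable (fun t => f (Int.fract t)) volume x y)
    (hf1 : pieVal f 0 1 = 1)
    (a b : ℕ → ℝ) (hab : isExactPiePartition n s a b) :
    ∃ j < n, MMSpie f (n + 1) s ≤ pieVal f (a j) (b j) := by
  classical
  obtain ⟨ha, hg, hw⟩ := hab
  obtain ⟨j0, hj0mem, hj0max⟩ :=
    Finset.exists_max_image (Finset.range n) (fun j => pieVal f (a j) (b j))
      ⟨0, Finset.mem_range.mpr (by omega)⟩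
  rw [Finset.mem_range] at hj0mem
  refine ⟨j0, hj0mem, ?_⟩
  have hval0 : (0 : ℝ) ≤ pieVal f (a j0) (b j0) :=
    intervalIntegral.integral_nonneg (ha j0 hj0mem) (fun u _ => hf0 _)
  apply Real.sSup_le _ hval0
  rintro m ⟨a', b', ⟨ha', hg', hw'⟩, rfl⟩
  have hw'' : b' n + s ≤ a' 0 + 1 := by simpa using hw'
  set m0 : ℤ := ⌈a 0 + 1 - a' 0⌉ with hm0
  set A : ℕ → ℝ := fun j => a' j + (m0 : ℝ) with hAdef
  set B : ℕ → ℝ := fun j => b' j + (m0 : ℝ) with hBdef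
  have hA0 : a 0 + 1 ≤ A 0 := by
    have := Int.le_ceil (a 0 + 1 - a' 0)
    simp only [hAdef]
    linarith
  have hA0' : A 0 < a 0 + 2 := by
    have := Int.ceil_lt_add_one (a 0 + 1 - a' 0)
    simp only [hAdef]
    linarith
  set N : ℝ := b (n - 1) + 1 with hNdef
  have hNval : N = a 0 + 2 - s := by rw [hNdef]; linarith [hw]
  have haA : ∀ j, j ≤ n → A j ≤ B j := by
    intro j hj
    simp only [hAdef, hBdef]
    have := ha' j (by omega)
    linarith
  have hgA : ∀ j, j < n → B j + s ≤ A (j + 1) := by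
    intro j hj
    simp only [hAdef, hBdef]
    have := hg' j (by omega)
    linarith
  have hwA : B n + s ≤ A 0 + 1 := by
    simp only [hAdef, hBdef]
    linarith
  have hBnN : B n - 1 ≤ N := by
    have := hwA
    linarith [hNval, hA0']
  obtain ⟨c, hcn, hc2, hc3⟩ : ∃ c, c ≤ n ∧ (c < n → a 0 + 2 ≤ A (c + 1)) ∧
      (1 ≤ c → B (c - 1) ≤ N) := by
    by_cases hex : ∃ i, N < B i ∧ i ≤ n
    · set r := Nat.find hex with hr
      obtain ⟨hrN, hrn⟩ := Nat.find_spec hex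
      have hmin : ∀ j, j < r → j ≤ n → B j ≤ N := by
        intro j hj hjn
        by_contra hcon
        exact Nat.find_min hex hj ⟨lt_of_not_ge hcon, hjn⟩
      by_cases hr1 : a 0 + 2 ≤ A r
      · have hr0 : 1 ≤ r := by
          by_contra h
          have h0 : r = 0 := by omega
          rw [h0] at hr1
          linarith
        refine ⟨r - 1, by omega, fun h => ?_, fun h => ?_⟩
        · have e : r - 1 + 1 = r := by omega
          rw [e]
          exact hr1
        · exact hmin (r - 1 - 1) (by omega) (by omega)
      · refine ⟨r, hrn, fun h => ?_, fun h => ?_⟩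
        · have := hgA r h
          push_neg at hr1
          linarith [hNval]
        · exact hmin (r - 1) (by omega) (by omega)
    · push_neg at hex
      refine ⟨n, le_refl n, fun h => absurd h (lt_irrefl n), fun _ => ?_⟩
      by_contra hcon
      have := hex (n - 1) (lt_of_not_ge hcon)
      omega
  set p : ℕ → ℝ := fun i =>
    if c + 1 + i ≤ n then A (c + 1 + i) - 1 else A (c + 1 + i - (n + 1)) with hpdef
  set q : ℕ → ℝ := fun i =>
    if c + 1 + i ≤ n then B (c + 1 + i) - 1 else B (c + 1 + i - (n + 1)) with hqdef
  have h1 : a 0 + 1 ≤ p 0 := by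
    simp only [hpdef]
    split_ifs with h
    · have := hc2 (by omega)
      linarith
    · have e : c + 1 + 0 - (n + 1) = 0 := by omega
      rw [e]
      exact hA0
  have h3 : ∀ i, i + 1 < n → q i + s ≤ p (i + 1) := by
    intro i hi
    simp only [hpdef, hqdef]
    by_cases h1' : c + 1 + (i + 1) ≤ n
    · have h2' : c + 1 + i ≤ n := by omega
      rw [if_pos h2', if_pos h1']
      have e : c + 1 + (i + 1) = (c + 1 + i) + 1 := by omega
      rw [e]
      have := hgA (c + 1 + i) (by omega)
      linarith
    · by_cases h2' : c + 1 + i ≤ n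
      · have hcin : c + 1 + i = n := by omega
        rw [if_pos h2', if_neg h1']
        have e : c + 1 + (i + 1) - (n + 1) = 0 := by omega
        rw [e, hcin]
        linarith
      · rw [if_neg h2', if_neg h1']
        have e : c + 1 + (i + 1) - (n + 1) = (c + 1 + i - (n + 1)) + 1 := by omega
        rw [e]
        exact hgA _ (by omega)
  have h4 : q (n - 1) ≤ b (n - 1) + 1 := by
    simp only [hqdef]
    split_ifs with h
    · have e : c + 1 + (n - 1) = n := by omega
      rw [e]
      linarith [hBnN]
    · have e : c + 1 + (n - 1) - (n + 1) = c - 1 := by omega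
      rw [e]
      have := hc3 (by omega)
      linarith
  obtain ⟨i, hin, hpi, hqi⟩ := cake_lemma n s (fun j => a j + 1) (fun j => b j + 1) p q
    (fun j hj => by have := hg j hj; linarith) h1 h3 h4 (by omega)
  have hpq : p i ≤ q i := by
    simp only [hpdef, hqdef]
    split_ifs with h
    · have := haA (c + 1 + i) (by omega)
      linarith
    · exact haA _ (by omega)
  have hmono : pieVal f (p i) (q i) ≤ pieVal f (a i + 1) (b i + 1) := by
    unfold pieVal
    exact intervalIntegral.integral_mono_interval hpi hpq hqi
      (ae_of_all _ (fun t => hf0 _)) (hfi _ _)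
  have hshift1 : pieVal f (a i + 1) (b i + 1) = pieVal f (a i) (b i) := by
    have := pieVal_add_int f 1 (a i) (b i)
    simpa using this
  set j1 : ℕ := if c + 1 + i ≤ n then c + 1 + i else c + 1 + i - (n + 1) with hj1def
  have hj1n : j1 < n + 1 := by
    rw [hj1def]
    split_ifs <;> omega
  have hshift2 : pieVal f (p i) (q i) = pieVal f (a' j1) (b' j1) := by
    rw [hj1def]
    simp only [hpdef, hqdef]
    split_ifs with h
    · have e1 : A (c + 1 + i) - 1 = a' (c + 1 + i) + ((m0 - 1 : ℤ) : ℝ) := by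
        simp only [hAdef]; push_cast; ring
      have e2 : B (c + 1 + i) - 1 = b' (c + 1 + i) + ((m0 - 1 : ℤ) : ℝ) := by
        simp only [hBdef]; push_cast; ring
      rw [e1, e2, pieVal_add_int]
    · have e1 : A (c + 1 + i - (n + 1)) = a' (c + 1 + i - (n + 1)) + ((m0 : ℤ) : ℝ) := by
        simp only [hAdef]
      have e2 : B (c + 1 + i - (n + 1)) = b' (c + 1 + i - (n + 1)) + ((m0 : ℤ) : ℝ) := by
        simp only [hBdef]
      rw [e1, e2, pieVal_add_int]
  have hinf : (⨅ j : Fin (n + 1), pieVal f (a' (j : ℕ)) (b' (j : ℕ))) ≤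
      pieVal f (a' j1) (b' j1) := by
    have hb : BddBelow (Set.range fun j : Fin (n + 1) => pieVal f (a' (j : ℕ)) (b' (j : ℕ))) :=
      Finite.bddBelow_range _
    exact ciInf_le hb (⟨j1, hj1n⟩ : Fin (n + 1))
  calc (⨅ j : Fin (n + 1), pieVal f (a' (j : ℕ)) (b' (j : ℕ)))
      ≤ pieVal f (a' j1) (b' j1) := hinf
    _ = pieVal f (p i) (q i) := hshift2.symm
    _ ≤ pieVal f (a i + 1) (b i + 1) := hmono
    _ = pieVal f (a i) (b i) := hshift1
    _ ≤ pieVal f (a j0) (b j0) := hj0max i (Finset.mem_range.mpr hin)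
end

section
/- Let f: [0,1] → ℝ≥0 be integrable with v(x,y) = ∫ₓʸ f and ∫₀¹ f = 1, let n ≥ 2, s ∈ (0, 1/(n-1)), and r > 0. Define greedily: x₀ = 0, and for j = 1,…,n-1, let y_j be the leftmost point ≥ x_{j-1} with v(x_{j-1}, y_j) = r (if it exists) and set x_j = y_j + s. Then MMS^{n,s} ≥ r if and only if all points y₁,…,y_{n-1} exist, x_{n-1} ≤ 1, and v(x_{n-1}, 1) ≥ r. -/
/-!
A separated partition all of whose pieces are worth at least `r` dominates the greedy run: by
induction the `j`-th greedy piece starts no later than the `j`-th piece of the partition, since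
the leftmost cut worth `r` after it cannot lie beyond that piece's right end. The partition values
form the continuous image of a compact set of endpoint sequences, so the maximin share is attained
and `r ≤ MMS` provides such a partition. Conversely, the greedy pieces themselves form a separated
partition of minimum value at least `r`.
-/

open MeasureTheory

open Set

section

variable {f : ℝ → ℝ} {n : ℕ} {s r : ℝ} {a b : ℕ → ℝ}

lemma intervalIntegrable_of_mem_Icc (hfi : IntervalIntegrable f volume 0 1) {x y : ℝ}
    (hx : x ∈ Icc (0 : ℝ) 1) (hy : y ∈ Icc (0 : ℝ) 1) : IntervalIntegrable f volume x y := by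
  rw [← uIcc_of_le zero_le_one] at hx hy
  exact hfi.mono_set (uIcc_subset_uIcc hx hy)

lemma cakeVal_mono (hf0 : ∀ t, 0 ≤ f t) (hfi : IntervalIntegrable f volume 0 1)
    {x u v y : ℝ} (hx : 0 ≤ x) (hxu : x ≤ u) (huv : u ≤ v) (hvy : v ≤ y) (hy : y ≤ 1) :
    cakeVal f u v ≤ cakeVal f x y :=
  intervalIntegral.integral_mono_interval hxu huv hvy (ae_of_all _ hf0)
    (intervalIntegrable_of_mem_Icc hfi ⟨hx, by linarith⟩ ⟨by linarith, hy⟩)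

lemma continuousOn_cakeVal_left (hfi : IntervalIntegrable f volume 0 1) {t : ℝ}
    (ht : t ∈ Icc (0 : ℝ) 1) : ContinuousOn (cakeVal f t) (Icc 0 1) := by
  rw [← uIcc_of_le zero_le_one] at ht ⊢
  exact intervalIntegral.continuousOn_primitive_interval' hfi ht

lemma continuousOn_cakeVal_s15 (hfi : IntervalIntegrable f volume 0 1) :
    ContinuousOn (fun q : ℝ × ℝ => cakeVal f q.1 q.2) (Icc 0 1 ×ˢ Icc 0 1) := by
  have h0 : (0 : ℝ) ∈ Icc (0 : ℝ) 1 := left_mem_Icc.2 zero_le_one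
  have hG := continuousOn_cakeVal_left hfi h0
  refine ((hG.comp continuousOn_snd fun q hq => hq.2).sub
    (hG.comp continuousOn_fst fun q hq => hq.1)).congr fun q hq => ?_
  exact (intervalIntegral.integral_interval_sub_left (intervalIntegrable_of_mem_Icc hfi h0 hq.2)
    (intervalIntegrable_of_mem_Icc hfi h0 hq.1)).symm

lemma isSepPartition.mono (hs : 0 ≤ s) (h : isSepPartition n s a b) {i j : ℕ} (hij : i ≤ j)
    (hjn : j < n) : a i ≤ a j ∧ b i ≤ b j := by
  induction j, hij using Nat.le_induction with
  | base => exact ⟨le_rfl, le_rfl⟩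
  | succ j hij ih =>
    obtain ⟨ha, hb⟩ := ih (by omega)
    have hsep := h.2.2.1 j hjn
    have hj := h.2.1 j (by omega)
    have hj' := h.2.1 (j + 1) hjn
    constructor <;> linarith

lemma isSepPartition.nonneg (hs : 0 ≤ s) (h : isSepPartition n s a b) {j : ℕ} (hj : j < n) :
    0 ≤ a j :=
  h.1.trans (h.mono hs j.zero_le hj).1

lemma isSepPartition.le_one (hs : 0 ≤ s) (h : isSepPartition n s a b) {j : ℕ} (hj : j < n) :
    b j ≤ 1 :=
  (h.mono hs (Nat.le_sub_one_of_lt hj) (by omega)).2.trans h.2.2.2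

lemma isSepPartition_congr (hn : n ≠ 0) {a' b' : ℕ → ℝ} (ha : ∀ j < n, a j = a' j)
    (hb : ∀ j < n, b j = b' j) (h : isSepPartition n s a b) : isSepPartition n s a' b' := by
  obtain ⟨h0, hab, hsep, hlast⟩ := h
  refine ⟨?_, fun j hj => ?_, fun j hj => ?_, ?_⟩
  · rwa [← ha 0 (by omega)]
  · rw [← ha j hj, ← hb j hj]; exact hab j hj
  · rw [← ha (j + 1) hj, ← hb j (by omega)]; exact hsep j hj
  · rwa [← hb (n - 1) (by omega)]

lemma minValue_congr {a' b' : ℕ → ℝ} (ha : ∀ j < n, a j = a' j) (hb : ∀ j < n, b j = b' j) :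
    minValue f n a b = minValue f n a' b' :=
  iInf_congr fun j => by rw [ha j j.isLt, hb j j.isLt]

lemma minValue_le (j : Fin n) : minValue f n a b ≤ cakeVal f (a j) (b j) :=
  ciInf_le (finite_range _).bddBelow j

lemma isClosed_setOf_isSepPartition :
    IsClosed {p : (ℕ → ℝ) × (ℕ → ℝ) | isSepPartition n s p.1 p.2} := by
  simp only [isSepPartition, ofPred_and, ofPred_forall]
  refine (isClosed_le continuous_const (by fun_prop)).inter <| .inter ?_ <| .inter ?_ <|
    isClosed_le (by fun_prop) continuous_const
  all_goals exact isClosed_iInter fun j => isClosed_iInter fun _ =>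
    isClosed_le (by fun_prop) (by fun_prop)

lemma continuousOn_minValue (hn : n ≠ 0) (hfi : IntervalIntegrable f volume 0 1) :
    ContinuousOn (fun p : (ℕ → ℝ) × (ℕ → ℝ) => minValue f n p.1 p.2)
      (univ.pi (fun _ => Icc 0 1) ×ˢ univ.pi (fun _ => Icc 0 1)) := by
  have : Nonempty (Fin n) := ⟨⟨0, by omega⟩⟩
  simp only [minValue, ← Finset.inf'_univ_eq_ciInf]
  refine ContinuousOn.finset_inf'_apply _ fun j _ => ?_
  have hmaps : MapsTo (fun p : (ℕ → ℝ) × (ℕ → ℝ) => (p.1 j, p.2 j))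
      (univ.pi (fun _ => Icc 0 1) ×ˢ univ.pi (fun _ => Icc 0 1)) (Icc 0 1 ×ˢ Icc 0 1) :=
    fun p hp => ⟨hp.1 j trivial, hp.2 j trivial⟩
  exact (continuousOn_cakeVal_s15 hfi).comp (by fun_prop) hmaps

lemma isCompact_setOf_minValue (hn : n ≠ 0) (hs : 0 ≤ s) (hfi : IntervalIntegrable f volume 0 1) :
    IsCompact {m | ∃ a b : ℕ → ℝ, isSepPartition n s a b ∧ m = minValue f n a b} := by
  set B : Set ((ℕ → ℝ) × (ℕ → ℝ)) := univ.pi (fun _ => Icc 0 1) ×ˢ univ.pi (fun _ => Icc 0 1)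
  have hB : IsCompact B :=
    (isCompact_univ_pi fun _ => isCompact_Icc).prod (isCompact_univ_pi fun _ => isCompact_Icc)
  have hK := hB.inter_left (isClosed_setOf_isSepPartition (n := n) (s := s))
  convert hK.image_of_continuousOn ((continuousOn_minValue hn hfi).mono inter_subset_right)
    using 1
  ext m
  constructor
  · rintro ⟨a, b, h, rfl⟩
    -- the values beyond index `n - 1` are irrelevant, so set them to `0` to land in `B`
    let trunc (c : ℕ → ℝ) : ℕ → ℝ := fun j => if j < n then c j else 0
    have ha : ∀ j < n, a j = trunc a j := fun j hj => (if_pos hj).symm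
    have hb : ∀ j < n, b j = trunc b j := fun j hj => (if_pos hj).symm
    refine ⟨(trunc a, trunc b), ⟨isSepPartition_congr hn ha hb h, ?_, ?_⟩,
      (minValue_congr ha hb).symm⟩ <;> intro j _ <;> simp only [trunc] <;> split_ifs with hj
    · exact ⟨h.nonneg hs hj, (h.2.1 j hj).trans (h.le_one hs hj)⟩
    · exact left_mem_Icc.2 zero_le_one
    · exact ⟨(h.nonneg hs hj).trans (h.2.1 j hj), h.le_one hs hj⟩
    · exact left_mem_Icc.2 zero_le_one
  · rintro ⟨p, hp, rfl⟩
    exact ⟨p.1, p.2, hp.1, rfl⟩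

lemma minValue_le_MMScake (hn : n ≠ 0) (hs : 0 ≤ s) (hfi : IntervalIntegrable f volume 0 1)
    (h : isSepPartition n s a b) : minValue f n a b ≤ MMScake f n s :=
  le_csSup (isCompact_setOf_minValue hn hs hfi).bddAbove ⟨a, b, h, rfl⟩

lemma exists_minValue_eq_MMScake (hn : n ≠ 0) (hs : 0 ≤ s)
    (hfi : IntervalIntegrable f volume 0 1) (hpos : 0 < MMScake f n s) :
    ∃ a b : ℕ → ℝ, isSepPartition n s a b ∧ minValue f n a b = MMScake f n s := by
  have hne : {m | ∃ a b : ℕ → ℝ, isSepPartition n s a b ∧ m = minValue f n a b}.Nonempty := by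
    refine nonempty_iff_ne_empty.2 fun h => ?_
    rw [MMScake, h, Real.sSup_empty] at hpos
    exact lt_irrefl _ hpos
  obtain ⟨a, b, h, he⟩ := (isCompact_setOf_minValue hn hs hfi).sSup_mem hne
  exact ⟨a, b, h, he.symm⟩

/-- Junk value `0` when no `z ∈ [t, 1]` has `r ≤ cakeVal f t z`. -/
noncomputable def greedyCut (f : ℝ → ℝ) (r t : ℝ) : ℝ :=
  sInf {z ∈ Icc t 1 | r ≤ cakeVal f t z}

noncomputable def greedyPoint (f : ℝ → ℝ) (r s : ℝ) : ℕ → ℝ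
  | 0 => 0
  | j + 1 => greedyCut f r (greedyPoint f r s j) + s

lemma greedyCut_spec (hf0 : ∀ t, 0 ≤ f t) (hfi : IntervalIntegrable f volume 0 1) (hr : 0 ≤ r)
    {t w : ℝ} (ht : 0 ≤ t) (htw : t ≤ w) (hw : w ≤ 1) (hrw : r ≤ cakeVal f t w) :
    t ≤ greedyCut f r t ∧ greedyCut f r t ≤ w ∧ cakeVal f t (greedyCut f r t) = r ∧
      ∀ z, t ≤ z → cakeVal f t z = r → greedyCut f r t ≤ z := by
  set S := {z ∈ Icc t 1 | r ≤ cakeVal f t z}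
  have hcont : ContinuousOn (cakeVal f t) (Icc t 1) :=
    (continuousOn_cakeVal_left hfi ⟨ht, htw.trans hw⟩).mono (Icc_subset_Icc_left ht)
  have hbdd : BddBelow S := ⟨t, fun z hz => hz.1.1⟩
  have hle : ∀ z ∈ S, greedyCut f r t ≤ z := fun z hz => csInf_le hbdd hz
  have hmem : greedyCut f r t ∈ S :=
    (hcont.preimage_isClosed_of_isClosed isClosed_Icc isClosed_Ici).csInf_mem
      ⟨w, ⟨htw, hw⟩, hrw⟩ hbdd
  obtain ⟨z₀, hz₀, hz₀r⟩ : ∃ z₀ ∈ Icc t w, cakeVal f t z₀ = r :=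
    intermediate_value_Icc htw (hcont.mono (Icc_subset_Icc_right hw))
      ⟨by simpa [cakeVal] using hr, hrw⟩
  refine ⟨hmem.1.1, hle w ⟨⟨htw, hw⟩, hrw⟩, le_antisymm ?_ hmem.2, fun z hz hzr => ?_⟩
  · calc cakeVal f t (greedyCut f r t)
        _ ≤ cakeVal f t z₀ := cakeVal_mono hf0 hfi ht le_rfl hmem.1.1
          (hle z₀ ⟨⟨hz₀.1, hz₀.2.trans hw⟩, hz₀r.ge⟩) (hz₀.2.trans hw)
        _ = r := hz₀r
  · by_cases hz1 : z ≤ 1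
    · exact hle z ⟨⟨hz, hz1⟩, hzr.ge⟩
    · exact hmem.1.2.trans (le_of_not_ge hz1)

lemma greedyPoint_le_of_isSepPartition (hf0 : ∀ t, 0 ≤ f t)
    (hfi : IntervalIntegrable f volume 0 1) (hr : 0 ≤ r) (hs : 0 ≤ s)
    (h : isSepPartition n s a b) (hpiece : ∀ j < n, r ≤ cakeVal f (a j) (b j)) {j : ℕ}
    (hj : j < n) : 0 ≤ greedyPoint f r s j ∧ greedyPoint f r s j ≤ a j := by
  induction j with
  | zero => exact ⟨le_rfl, h.1⟩
  | succ j ih =>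
    obtain ⟨hx0, hxa⟩ := ih (by omega)
    have hab := h.2.1 j (by omega)
    have hb1 := h.le_one hs (j := j) (by omega)
    obtain ⟨hxy, hyb, -, -⟩ := greedyCut_spec hf0 hfi hr hx0 (hxa.trans hab) hb1
      ((hpiece j (by omega)).trans (cakeVal_mono hf0 hfi hx0 hxa hab le_rfl hb1))
    have hsep := h.2.2.1 j hj
    constructor <;> simp only [greedyPoint] <;> linarith

/-- `x j` is the start of the `j`-th greedy piece and `x (j + 1) - s` (the paper's `y_{j+1}`)
its end. -/
def IsSuccessfulGreedyRun (f : ℝ → ℝ) (n : ℕ) (s r : ℝ) (x : ℕ → ℝ) : Prop :=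
  x 0 = 0 ∧
    (∀ j, j + 1 ≤ n - 1 →
      x j ≤ x (j + 1) - s ∧
      cakeVal f (x j) (x (j + 1) - s) = r ∧
      (∀ z, x j ≤ z → cakeVal f (x j) z = r → x (j + 1) - s ≤ z)) ∧
    x (n - 1) ≤ 1 ∧ r ≤ cakeVal f (x (n - 1)) 1

lemma isSuccessfulGreedyRun_greedyPoint (hn : n ≠ 0) (hs : 0 ≤ s) (hf0 : ∀ t, 0 ≤ f t)
    (hfi : IntervalIntegrable f volume 0 1) (hr : 0 < r) (h : r ≤ MMScake f n s) :
    IsSuccessfulGreedyRun f n s r (greedyPoint f r s) := by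
  obtain ⟨a, b, hp, hab⟩ := exists_minValue_eq_MMScake hn hs hfi (hr.trans_le h)
  have hpiece : ∀ j < n, r ≤ cakeVal f (a j) (b j) :=
    fun j hj => (h.trans hab.ge).trans (minValue_le (⟨j, hj⟩ : Fin n))
  have hx := fun j (hj : j < n) =>
    greedyPoint_le_of_isSepPartition hf0 hfi hr.le hs hp hpiece hj
  have hxb : ∀ j < n, r ≤ cakeVal f (greedyPoint f r s j) (b j) := fun j hj =>
    (hpiece j hj).trans (cakeVal_mono hf0 hfi (hx j hj).1 (hx j hj).2 (hp.2.1 j hj) le_rfl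
      (hp.le_one hs hj))
  have hlast : n - 1 < n := by omega
  refine ⟨rfl, fun j hj => ?_, ?_, ?_⟩
  · have hjn : j < n := by omega
    obtain ⟨h1, -, h2, h3⟩ := greedyCut_spec hf0 hfi hr.le (hx j hjn).1
      ((hx j hjn).2.trans (hp.2.1 j hjn)) (hp.le_one hs hjn) (hxb j hjn)
    simpa only [greedyPoint, add_sub_cancel_right] using ⟨h1, h2, h3⟩
  · exact ((hx _ hlast).2.trans (hp.2.1 _ hlast)).trans (hp.le_one hs hlast)
  · exact (hxb _ hlast).trans (cakeVal_mono hf0 hfi (hx _ hlast).1 le_rfl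
      ((hx _ hlast).2.trans (hp.2.1 _ hlast)) (hp.le_one hs hlast) le_rfl)

lemma IsSuccessfulGreedyRun.le_MMScake (hn : n ≠ 0) (hs : 0 ≤ s)
    (hfi : IntervalIntegrable f volume 0 1) {x : ℕ → ℝ}
    (hx : IsSuccessfulGreedyRun f n s r x) : r ≤ MMScake f n s := by
  obtain ⟨hx0, hstep, hlast, hleft⟩ := hx
  set b : ℕ → ℝ := fun j => if j + 1 < n then x (j + 1) - s else 1
  have hb : b (n - 1) = 1 := if_neg (by omega)
  have hp : isSepPartition n s x b := by
    refine ⟨hx0.ge, fun j hj => ?_, fun j hj => ?_, ?_⟩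
    · by_cases h : j + 1 < n
      · simpa [b, h] using (hstep j (by omega)).1
      · obtain rfl : j = n - 1 := by omega
        rwa [hb]
    · simp [b, hj]
    · exact hb.le
  have : Nonempty (Fin n) := ⟨⟨0, by omega⟩⟩
  refine le_trans (le_ciInf fun j => ?_) (minValue_le_MMScake hn hs hfi hp)
  by_cases h : (j : ℕ) + 1 < n
  · simp [b, h, (hstep j (by omega)).2.1]
  · rwa [show (j : ℕ) = n - 1 by omega, hb]

end

theorem stmt_15_general (n : ℕ) (hn : 2 ≤ n) (s : ℝ) (hs : 0 < s)
    (f : ℝ → ℝ) (hf0 : ∀ t, 0 ≤ f t)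
    (hfi : IntervalIntegrable f volume 0 1)
    (r : ℝ) (hr : 0 < r) :
    r ≤ MMScake f n s ↔
      ∃ x : ℕ → ℝ, x 0 = 0 ∧
        (∀ j, j + 1 ≤ n - 1 →
          x j ≤ x (j + 1) - s ∧
          cakeVal f (x j) (x (j + 1) - s) = r ∧
          (∀ z, x j ≤ z → cakeVal f (x j) z = r → x (j + 1) - s ≤ z)) ∧
        x (n - 1) ≤ 1 ∧ r ≤ cakeVal f (x (n - 1)) 1 := by
  have hn0 : n ≠ 0 := by omega
  exact ⟨fun h => ⟨greedyPoint f r s, isSuccessfulGreedyRun_greedyPoint hn0 hs.le hf0 hfi hr h⟩,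
    fun ⟨_, hx⟩ => IsSuccessfulGreedyRun.le_MMScake hn0 hs.le hfi hx⟩

/-- Greedy characterization of `MMS ≥ r`: starting at `x 0 = 0`, cut at the leftmost point
`y_{j+1} = x (j+1) - s` giving value exactly `r`, then skip a gap of length `s`. Then
`MMS^{n,s} ≥ r` iff all the greedy points exist, `x (n-1) ≤ 1`, and the leftover piece
`[x (n-1), 1]` has value at least `r`. -/
theorem stmt_15 (n : ℕ) (hn : 2 ≤ n) (s : ℝ) (hs : 0 < s) (hs' : s < 1 / ((n : ℝ) - 1))
    (f : ℝ → ℝ) (hf0 : ∀ t, 0 ≤ f t)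
    (hfi : IntervalIntegrable f volume 0 1)
    (hf1 : cakeVal f 0 1 = 1)
    (r : ℝ) (hr : 0 < r) :
    r ≤ MMScake f n s ↔
      ∃ x : ℕ → ℝ, x 0 = 0 ∧
        (∀ j, j + 1 ≤ n - 1 →
          x j ≤ x (j + 1) - s ∧
          cakeVal f (x j) (x (j + 1) - s) = r ∧
          (∀ z, x j ≤ z → cakeVal f (x j) z = r → x (j + 1) - s ≤ z)) ∧
        x (n - 1) ≤ 1 ∧ r ≤ cakeVal f (x (n - 1)) 1 :=
  stmt_15_general n hn s hs f hf0 hfi r hr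
end

section
/- Let f be a nonnegative integrable density on [0,1] with total value 1, s > 0, and n ≥ 2 with (2n-2)s < 1. Suppose there is an s-separated partition P₁,…,P_{2n-1} of [0,1] into 2n-1 intervals each of value at least m (so m ≤ MMS^{2n-1,s}). Consider the moving-knife process that starts at 0 and advances in steps of length s, cutting the first time the left piece has value ≥ m, then skipping a gap of s and repeating. Then after each of the first n-1 cuts, if j pieces have been cut so far and the value-m threshold was used each time, the remaining cake [t_j + s, 1] contains the interval P_{2j+1}; in particular, the process produces n pieces each of value at least m. -/
open MeasureTheory

/-- The moving-knife process of Theorem 17: given an `s`-separated partition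
`P₁,…,P_{2n-1}` of `[0,1]` (pieces `[x j, y j]`, 0-based) each of value at least `m`, the
knife starts at `0` and advances in steps of length `s`, cutting the first time the left piece
has value at least `m`, then skipping a gap of `s` and repeating (cut points `t j`, with
`t 0 = -s` so that the first piece is `[0, t 1]`). Then after each of the first `n-1` cuts the
remaining cake `[t j + s, 1]` contains the piece `P_{2j+1}` (0-based index `2j`); in
particular the process produces `n` pieces each of value at least `m`. -/
theorem stmt_17 (n : ℕ) (hn : 2 ≤ n) (s : ℝ) (hs : 0 < s)
    (hs' : (2 * (n : ℝ) - 2) * s < 1)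
    (f : ℝ → ℝ) (hf0 : ∀ t, 0 ≤ f t)
    (hfi : IntervalIntegrable f volume 0 1)
    (hf1 : cakeVal f 0 1 = 1)
    (m : ℝ) (hm : 0 ≤ m)
    (x y : ℕ → ℝ)
    (hx0 : 0 ≤ x 0)
    (hxy : ∀ j, j < 2 * n - 1 → x j ≤ y j)
    (hsep : ∀ j, j + 1 < 2 * n - 1 → y j + s ≤ x (j + 1))
    (hlast : y (2 * n - 2) ≤ 1)
    (hval : ∀ j, j < 2 * n - 1 → m ≤ cakeVal f (x j) (y j))
    (t : ℕ → ℝ)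
    (ht0 : t 0 = -s)
    (htrec : ∀ j, 1 ≤ j → j ≤ n - 1 →
      (∃ k : ℕ, 1 ≤ k ∧ t j = t (j - 1) + s + k * s) ∧
      m ≤ cakeVal f (t (j - 1) + s) (t j) ∧
      (∀ k : ℕ, 1 ≤ k → t (j - 1) + s + k * s < t j →
        cakeVal f (t (j - 1) + s) (t (j - 1) + s + k * s) < m)) :
    (∀ j, j ≤ n - 1 → t j + s ≤ x (2 * j)) ∧
      m ≤ cakeVal f (t (n - 1) + s) 1 := by
  -- every endpoint is ≤ 1
  have hybound : ∀ j, j < 2 * n - 1 → y j ≤ 1 := by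
    have H : ∀ d j, j + d = 2 * n - 2 → y j ≤ 1 := by
      intro d
      induction d with
      | zero =>
        intro j hj
        have : j = 2 * n - 2 := by omega
        rw [this]; exact hlast
      | succ d ih =>
        intro j hj
        have h1 := hsep j (by omega)
        have h2 := hxy (j + 1) (by omega)
        have h3 := ih (j + 1) (by omega)
        linarith
    intro j hj
    exact H (2 * n - 2 - j) j (by omega)
  -- monotonicity of cakeVal
  have hmono : ∀ a b c d : ℝ, 0 ≤ a → a ≤ b → b ≤ c → c ≤ d → d ≤ 1 →
      cakeVal f b c ≤ cakeVal f a d := by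
    intro a b c d h0 hab hbc hcd hd1
    have hint : IntervalIntegrable f volume a d := by
      apply hfi.mono_set
      rw [Set.uIcc_of_le (by linarith : a ≤ d), Set.uIcc_of_le (by norm_num : (0:ℝ) ≤ 1)]
      exact Set.Icc_subset_Icc h0 hd1
    exact intervalIntegral.integral_mono_interval hab hbc hcd
      (ae_of_all _ hf0) hint
  -- main induction
  have key : ∀ j, j ≤ n - 1 → 0 ≤ t j + s ∧ t j + s ≤ x (2 * j) := by
    intro j
    induction j with
    | zero =>
      intro _
      constructor
      · rw [ht0]; linarith
      · rw [ht0]; simpa using hx0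
    | succ j ih =>
      intro hj
      obtain ⟨hp0, hpx⟩ := ih (by omega)
      obtain ⟨⟨k, hk1, hkeq⟩, hvge, hmin⟩ := htrec (j + 1) (by omega) hj
      simp only [Nat.add_sub_cancel] at hkeq hvge hmin
      have h2j : 2 * j < 2 * n - 1 := by omega
      have h2j1 : 2 * j + 1 < 2 * n - 1 := by omega
      have hsep1 := hsep (2 * j) (by omega)
      have hsep2 := hsep (2 * j + 1) (by omega)
      have hxy1 := hxy (2 * j) h2j
      have hxy2 := hxy (2 * j + 1) h2j1
      have hy1 : y (2 * j) ≤ 1 := hybound _ h2j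
      have hy2 : y (2 * j + 1) ≤ 1 := hybound _ h2j1
      -- the cut happens no later than one step past y (2j)
      have htj1 : t (j + 1) ≤ y (2 * j) + s := by
        by_contra h
        push_neg at h
        set a : ℝ := (y (2 * j) - (t j + s)) / s with ha
        have ha0 : 0 ≤ a := div_nonneg (by linarith) hs.le
        set k0 : ℕ := max 1 ⌈a⌉₊ with hk0
        have hk01 : 1 ≤ k0 := le_max_left _ _
        have hge : a ≤ (k0 : ℝ) := by
          refine le_trans (Nat.le_ceil a) ?_
          exact_mod_cast le_max_right 1 ⌈a⌉₊
        have hle : (k0 : ℝ) ≤ a + 1 := by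
          rcases Nat.lt_or_ge ⌈a⌉₊ 1 with h1 | h1
          · have hae : ⌈a⌉₊ = 0 := by omega
            have hk : k0 = 1 := by rw [hk0, hae]; simp
            rw [hk]; push_cast; linarith
          · have hk : k0 = ⌈a⌉₊ := max_eq_right h1
            rw [hk]
            exact le_of_lt (Nat.ceil_lt_add_one ha0)
        have has : a * s = y (2 * j) - (t j + s) := div_mul_cancel₀ _ hs.ne'
        have hub : y (2 * j) ≤ t j + s + k0 * s := by
          nlinarith [mul_le_mul_of_nonneg_right hge hs.le]
        have hub2 : t j + s + k0 * s ≤ y (2 * j) + s := by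
          nlinarith [mul_le_mul_of_nonneg_right hle hs.le]
        have hlt : t j + s + k0 * s < t (j + 1) := by linarith
        have hlow := hmin k0 hk01 hlt
        have hge2 : m ≤ cakeVal f (t j + s) (t j + s + k0 * s) := by
          refine le_trans (hval (2 * j) h2j) ?_
          exact hmono (t j + s) (x (2 * j)) (y (2 * j)) (t j + s + k0 * s)
            hp0 hpx hxy1 hub (by linarith)
        linarith
      constructor
      · have hk1' : (1 : ℝ) ≤ (k : ℝ) := by exact_mod_cast hk1
        nlinarith
      · have h22 : 2 * (j + 1) = 2 * j + 1 + 1 := by ring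
        rw [h22]
        linarith
  refine ⟨fun j hj => (key j hj).2, ?_⟩
  obtain ⟨hp0, hpx⟩ := key (n - 1) le_rfl
  have h2n : 2 * (n - 1) = 2 * n - 2 := by omega
  rw [h2n] at hpx
  refine le_trans (hval (2 * n - 2) (by omega)) ?_
  exact hmono (t (n - 1) + s) (x (2 * n - 2)) (y (2 * n - 2)) 1
    hp0 hpx (hxy _ (by omega)) hlast le_rfl
end

section
/- Let k ≥ 2, s ∈ (0, 1/(2k)], and let v be a valuation on the pie of circumference 1 given by a nonnegative integrable density. Suppose the pie admits an s-separated partition into k arcs each of strictly positive value, and suppose some arc [x,y] of length 1/(2k) has v-value 0. Then the cake obtained by removing the open arc (x,y) from the pie admits an s-separated partition into k intervals each of strictly positive value. -/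
/-!
Write `y = x + 1/(2k)` and translate the pie partition by an integer so that its arcs lie in
`[x - 1, x + 1]`. There the zero arc appears twice, as `[x - 1, y - 1]` and `[x, y]`, so the
value of each arc is carried by its parts in `[y - 1, x]` and in `[y, x + 1]`, and one of them is
positive. Arcs whose part in `[y, x + 1]` is positive come after all the others; keeping that
part for them, and the other part moved up by one for the earlier arcs, gives an `s`-separated
partition of the cake `[y, x + 1]` after rotating the indices.
-/

open MeasureTheory

section NonnegIntegral

variable {g : ℝ → ℝ}

lemma intervalIntegral_eq_zero_of_subinterval (hg : ∀ t, 0 ≤ g t) {c d p q : ℝ}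
    (hgi : IntervalIntegrable g volume c d) (hcp : c ≤ p) (hpq : p ≤ q) (hqd : q ≤ d)
    (h0 : ∫ t in c..d, g t = 0) : ∫ t in p..q, g t = 0 :=
  le_antisymm
    (h0 ▸ intervalIntegral.integral_mono_interval hcp hpq hqd
      (Filter.Eventually.of_forall hg) hgi)
    (intervalIntegral.integral_nonneg hpq fun t _ => hg t)

lemma lt_of_intervalIntegral_pos (hg : ∀ t, 0 ≤ g t) {p q : ℝ}
    (h : 0 < ∫ t in p..q, g t) : p < q := by
  by_contra! hqp
  rw [intervalIntegral.integral_symm] at h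
  linarith [intervalIntegral.integral_nonneg (μ := volume) hqp fun t _ => hg t]

lemma Function.Periodic.intervalIntegral_add {c : ℝ} (hper : Function.Periodic g c) (p q : ℝ) :
    ∫ t in p + c..q + c, g t = ∫ t in p..q, g t := by
  rw [← intervalIntegral.integral_comp_add_right]
  exact intervalIntegral.integral_congr fun t _ => hper t

end NonnegIntegral

section ClampIcc

/-- For `A ≤ B`, the interval `[clampIcc A B p, clampIcc A B q]` is `[A, B] ∩ [p, q]`, or a
single point when that intersection is empty. -/
def clampIcc (A B t : ℝ) : ℝ := max A (min B t)

variable {A B : ℝ}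

lemma clampIcc_mono : Monotone (clampIcc A B) :=
  fun _ _ h => max_le_max le_rfl (min_le_min le_rfl h)

lemma left_le_clampIcc (t : ℝ) : A ≤ clampIcc A B t := le_max_left _ _

lemma clampIcc_le_right (hAB : A ≤ B) (t : ℝ) : clampIcc A B t ≤ B :=
  max_le hAB (min_le_left _ _)

lemma clampIcc_of_le_left {t : ℝ} (h : t ≤ A) : clampIcc A B t = A :=
  max_eq_left ((min_le_right _ _).trans h)

lemma le_clampIcc_of_lt_right {t : ℝ} (h : clampIcc A B t < B) : t ≤ clampIcc A B t := by
  rcases le_total t B with htB | hBt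
  · exact (min_eq_right htB).symm.le.trans (le_max_right _ _)
  · exact absurd h (not_lt.2 ((min_eq_left hBt).symm.le.trans (le_max_right _ _)))

lemma clampIcc_le_of_left_lt {t : ℝ} (h : A < clampIcc A B t) : clampIcc A B t ≤ t := by
  rw [clampIcc, max_eq_right ((lt_max_iff.1 h).resolve_left (lt_irrefl A)).le]
  exact min_le_right _ _

lemma mem_Icc_of_clampIcc_lt (hAB : A ≤ B) {p q : ℝ} (h : clampIcc A B p < clampIcc A B q) :
    p ≤ clampIcc A B p ∧ clampIcc A B q ≤ q :=
  ⟨le_clampIcc_of_lt_right (h.trans_le (clampIcc_le_right hAB q)),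
    clampIcc_le_of_left_lt ((left_le_clampIcc p).trans_lt h)⟩

end ClampIcc

section ClampIccIntegral

variable {g : ℝ → ℝ} {A B : ℝ}

lemma intervalIntegral_clampIcc_eq_zero (hg : ∀ t, 0 ≤ g t) (hAB : A ≤ B) {p q : ℝ}
    (hgi : IntervalIntegrable g volume p q) (hpq : p ≤ q) (h0 : ∫ t in p..q, g t = 0) :
    ∫ t in clampIcc A B p..clampIcc A B q, g t = 0 := by
  rcases (clampIcc_mono hpq).eq_or_lt with h | h
  · rw [h, intervalIntegral.integral_same]
  · obtain ⟨hp, hq⟩ := mem_Icc_of_clampIcc_lt hAB h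
    exact intervalIntegral_eq_zero_of_subinterval hg hgi hp h.le hq h0

-- The rest of `[A, B]` lies in the zero arcs `[x - 1, y - 1]` and `[x, y]`.
lemma intervalIntegral_clampIcc_pos_or (hg : ∀ t, 0 ≤ g t)
    (hgi : ∀ p q : ℝ, IntervalIntegrable g volume p q) (hper : Function.Periodic g 1)
    (hAB : A ≤ B) {x y : ℝ} (hA : x - 1 ≤ A) (hxy : x ≤ y) (h0 : ∫ t in x..y, g t = 0)
    (hpos : 0 < ∫ t in A..B, g t) :
    0 < ∫ t in clampIcc A B (y - 1)..clampIcc A B x, g t ∨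
      0 < ∫ t in clampIcc A B y..B, g t := by
  set c := clampIcc A B
  have h0' : ∫ t in x - 1..y - 1, g t = 0 := by
    rwa [← hper.intervalIntegral_add, sub_add_cancel, sub_add_cancel]
  have hzero₁ : ∫ t in A..c (y - 1), g t = 0 := by
    rw [← clampIcc_of_le_left hA]
    exact intervalIntegral_clampIcc_eq_zero hg hAB (hgi _ _) (by linarith) h0'
  have hzero₂ : ∫ t in c x..c y, g t = 0 :=
    intervalIntegral_clampIcc_eq_zero hg hAB (hgi _ _) hxy h0
  have hsplit : ∫ t in A..B, g t = (∫ t in A..c (y - 1), g t) + (∫ t in c (y - 1)..c x, g t) +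
      (∫ t in c x..c y, g t) + ∫ t in c y..B, g t := by
    simp only [intervalIntegral.integral_add_adjacent_intervals (hgi _ _) (hgi _ _)]
  by_contra! h
  linarith [h.1, h.2]

end ClampIccIntegral

def isCakePartition (k : ℕ) (s lo hi : ℝ) (a b : ℕ → ℝ) : Prop :=
  lo ≤ a 0 ∧ (∀ j, j < k → a j ≤ b j) ∧ (∀ j, j + 1 < k → b j + s ≤ a (j + 1)) ∧
    b (k - 1) ≤ hi

/-- The arcs `[a m, b m], …, [a (k-1), b (k-1)], [a 0 + 1, b 0 + 1], …,
[a (m-1) + 1, b (m-1) + 1]`. -/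
def rotateArcs (k m : ℕ) (a : ℕ → ℝ) (i : ℕ) : ℝ :=
  if i + m < k then a (i + m) else a (i + m - k) + 1

lemma forall_rotateArcs {P : ℝ → ℝ → Prop} {k m : ℕ} {a b : ℕ → ℝ}
    (hlate : ∀ j, m ≤ j → j < k → P (a j) (b j)) (hearly : ∀ j, j < m → P (a j + 1) (b j + 1))
    (i : ℕ) (hi : i < k) : P (rotateArcs k m a i) (rotateArcs k m b i) := by
  unfold rotateArcs
  split_ifs with h
  · exact hlate _ (by omega) h
  · exact hearly _ (by omega)

namespace isPiePartition

variable {k : ℕ} {s : ℝ} {a b : ℕ → ℝ}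

lemma add_const (h : isPiePartition k s a b) (c : ℝ) :
    isPiePartition k s (fun j => a j + c) (fun j => b j + c) := by
  obtain ⟨h₁, h₂, h₃⟩ := h
  exact ⟨fun j hj => by linarith [h₁ j hj], fun j hj => by linarith [h₂ j hj], by linarith⟩

lemma right_add_le_left (h : isPiePartition k s a b) (hs : 0 ≤ s) {i j : ℕ} (hij : i < j)
    (hj : j < k) : b i + s ≤ a j := by
  induction j with
  | zero => omega
  | succ j ih =>
    rcases Nat.lt_succ_iff_lt_or_eq.mp hij with hij | rfl
    · linarith [ih hij (by omega), h.1 j (by omega), h.2.1 j hj]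
    · exact h.2.1 i hj

lemma left_zero_le_and_right_add_le (h : isPiePartition k s a b) (hs : 0 ≤ s) {j : ℕ}
    (hj : j < k) :
    a 0 ≤ a j ∧ b j + s ≤ a 0 + 1 := by
  constructor
  · rcases Nat.eq_zero_or_pos j with rfl | hj0
    · rfl
    · linarith [h.right_add_le_left hs hj0 hj, h.1 0 (by omega)]
  · suffices b j ≤ b (k - 1) by linarith [h.2.2]
    rcases Nat.lt_or_ge j (k - 1) with hjk | hjk
    · linarith [h.right_add_le_left hs hjk (by omega), h.1 (k - 1) (by omega)]
    · rw [show j = k - 1 by omega]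

lemma mono (h : isPiePartition k s a b) (hk : 0 < k) {a' b' : ℕ → ℝ}
    (hsub : ∀ j, j < k → a j ≤ a' j ∧ a' j ≤ b' j ∧ b' j ≤ b j) : isPiePartition k s a' b' := by
  obtain ⟨h₁, h₂, h₃⟩ := h
  refine ⟨fun j hj => (hsub j hj).2.1, fun j hj => ?_, ?_⟩
  · linarith [h₂ j hj, (hsub j (by omega)).2.2, (hsub (j + 1) hj).1]
  · linarith [(hsub (k - 1) (by omega)).2.2, (hsub 0 hk).1]

lemma rotate (h : isPiePartition k s a b) {m : ℕ} (hmk : m ≤ k) :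
    isPiePartition k s (rotateArcs k m a) (rotateArcs k m b) := by
  obtain ⟨h₁, h₂, h₃⟩ := h
  dsimp only [isPiePartition, rotateArcs]
  refine ⟨fun j hj => ?_, fun j hj => ?_, ?_⟩
  · split_ifs with h
    · exact h₁ _ h
    · linarith [h₁ (j + m - k) (by omega)]
  · split_ifs with h h' h'
    · rw [show j + 1 + m = j + m + 1 by omega]
      exact h₂ _ (by omega)
    · rw [show j + m = k - 1 by omega, show j + 1 + m - k = 0 by omega]
      exact h₃
    · omega
    · rw [show j + 1 + m - k = j + m - k + 1 by omega]
      linarith [h₂ (j + m - k) (by omega)]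
  · split_ifs with h h' h'
    · obtain rfl : m = 0 := by omega
      simpa using h₃
    · omega
    · rw [show k - 1 + m - k = m - 1 by omega, zero_add]
      have := h₂ (m - 1) (by omega)
      rw [show m - 1 + 1 = m by omega] at this
      linarith
    · rw [show k - 1 + m - k = k - 1 by omega, show 0 + m - k = 0 by omega]
      linarith

lemma isCakePartition (h : isPiePartition k s a b) (hk : 0 < k) {lo hi : ℝ}
    (hwin : ∀ j, j < k → lo ≤ a j ∧ b j ≤ hi) : isCakePartition k s lo hi a b :=
  ⟨(hwin 0 hk).1, h.1, h.2.1, (hwin (k - 1) (by omega)).2⟩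

end isPiePartition

section CakeFromPie

variable {g : ℝ → ℝ} {k : ℕ} {s : ℝ} {a b : ℕ → ℝ} {x y : ℝ}

lemma isPiePartition.clampIcc_eq_left (hpart : isPiePartition k s a b) (hs : 0 ≤ s) {i j : ℕ}
    (hij : i < j) (hjk : j < k) (hy : clampIcc (a i) (b i) y < b i) :
    clampIcc (a j) (b j) y = a j :=
  clampIcc_of_le_left (by linarith [le_clampIcc_of_lt_right hy, hpart.right_add_le_left hs hij hjk])

theorem exists_isCakePartition_of_pos_pieces (hg : ∀ t, 0 ≤ g t) (hper : Function.Periodic g 1)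
    (hk : 0 < k) (hpart : isPiePartition k s a b) (hb : ∀ j, j < k → b j ≤ x + 1) {m : ℕ}
    (hmk : m ≤ k)
    (hearly : ∀ j, j < m → 0 < ∫ t in clampIcc (a j) (b j) (y - 1)..clampIcc (a j) (b j) x, g t)
    (hlate : ∀ j, m ≤ j → j < k → 0 < ∫ t in clampIcc (a j) (b j) y..b j, g t) :
    ∃ a' b' : ℕ → ℝ, isCakePartition k s y (x + 1) a' b' ∧
      ∀ j, j < k → 0 < ∫ t in a' j..b' j, g t := by
  let a₁ j := if j < m then clampIcc (a j) (b j) (y - 1) else clampIcc (a j) (b j) y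
  let b₁ j := if j < m then clampIcc (a j) (b j) x else b j
  refine ⟨rotateArcs k m a₁, rotateArcs k m b₁, ?_, ?_⟩
  · refine ((hpart.mono hk fun j hj => ?_).rotate hmk).isCakePartition hk
      (forall_rotateArcs (P := fun p q => y ≤ p ∧ q ≤ x + 1) (fun j hmj hjk => ?_) fun j hj => ?_)
    · simp only [a₁, b₁]
      split_ifs with h
      · exact ⟨left_le_clampIcc _, (lt_of_intervalIntegral_pos hg (hearly j h)).le,
          clampIcc_le_right (hpart.1 j hj) _⟩
      · exact ⟨left_le_clampIcc _,
          (lt_of_intervalIntegral_pos hg (hlate j (not_lt.1 h) hj)).le, le_rfl⟩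
    · simp only [a₁, b₁, if_neg (not_lt.2 hmj)]
      exact ⟨le_clampIcc_of_lt_right (lt_of_intervalIntegral_pos hg (hlate j hmj hjk)), hb j hjk⟩
    · simp only [a₁, b₁, if_pos hj]
      obtain ⟨h₁, h₂⟩ := mem_Icc_of_clampIcc_lt (hpart.1 j (by omega))
        (lt_of_intervalIntegral_pos hg (hearly j hj))
      constructor <;> linarith
  · refine forall_rotateArcs (P := fun p q => 0 < ∫ t in p..q, g t) (fun j hmj hjk => ?_)
      fun j hj => ?_
    · simp only [a₁, b₁, if_neg (not_lt.2 hmj)]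
      exact hlate j hmj hjk
    · simp only [a₁, b₁, if_pos hj, hper.intervalIntegral_add]
      exact hearly j hj

theorem exists_isCakePartition_of_window (hg : ∀ t, 0 ≤ g t)
    (hgi : ∀ p q : ℝ, IntervalIntegrable g volume p q) (hper : Function.Periodic g 1)
    (hk : 0 < k) (hs : 0 ≤ s) (hpart : isPiePartition k s a b)
    (hpos : ∀ j, j < k → 0 < ∫ t in a j..b j, g t) (hxy : x ≤ y) (h0 : ∫ t in x..y, g t = 0)
    (hwin : ∀ j, j < k → x - 1 ≤ a j ∧ b j ≤ x + 1) :
    ∃ a' b' : ℕ → ℝ, isCakePartition k s y (x + 1) a' b' ∧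
      ∀ j, j < k → 0 < ∫ t in a' j..b' j, g t := by
  classical
  -- `m` is the first arc (or `k`) whose part in `[y, x + 1]` has positive value
  have hex : ∃ m, k ≤ m ∨ 0 < ∫ t in clampIcc (a m) (b m) y..b m, g t := ⟨k, Or.inl le_rfl⟩
  have hmk : Nat.find hex ≤ k := Nat.find_min' hex (Or.inl le_rfl)
  refine exists_isCakePartition_of_pos_pieces hg hper hk hpart (fun j hj => (hwin j hj).2) hmk
    (fun j hj => ?_) fun j hmj hjk => ?_
  · exact (intervalIntegral_clampIcc_pos_or hg hgi hper (hpart.1 j (by omega))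
      (hwin j (by omega)).1 hxy h0 (hpos j (by omega))).resolve_right
      fun h => Nat.find_min hex hj (Or.inr h)
  · have hm := (Nat.find_spec hex).resolve_left (by omega)
    rcases hmj.eq_or_lt with rfl | hmj
    · exact hm
    · rw [hpart.clampIcc_eq_left hs hmj hjk (lt_of_intervalIntegral_pos hg hm)]
      exact hpos j hjk

theorem exists_isCakePartition (hg : ∀ t, 0 ≤ g t)
    (hgi : ∀ p q : ℝ, IntervalIntegrable g volume p q) (hper : Function.Periodic g 1)
    (hk : 0 < k) (hs : 0 ≤ s) (hpart : isPiePartition k s a b)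
    (hpos : ∀ j, j < k → 0 < ∫ t in a j..b j, g t) (hxy : x ≤ y) (h0 : ∫ t in x..y, g t = 0) :
    ∃ a' b' : ℕ → ℝ, isCakePartition k s y (x + 1) a' b' ∧
      ∀ j, j < k → 0 < ∫ t in a' j..b' j, g t := by
  set N : ℤ := ⌊x - a 0⌋
  have hperN : Function.Periodic g N := by simpa using hper.int_mul N
  refine exists_isCakePartition_of_window hg hgi hper hk hs (hpart.add_const N)
    (fun j hj => by rw [hperN.intervalIntegral_add]; exact hpos j hj) hxy h0 fun j hj => ?_
  obtain ⟨h₁, h₂⟩ := hpart.left_zero_le_and_right_add_le hs hj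
  have hN₁ := Int.floor_le (x - a 0)
  have hN₂ := Int.lt_floor_add_one (x - a 0)
  constructor <;> linarith

end CakeFromPie

theorem stmt_18_general (k : ℕ) (hk : 2 ≤ k) (s : ℝ) (hs : 0 < s)
    (f : ℝ → ℝ) (hf0 : ∀ t, 0 ≤ f t)
    (hfi : ∀ x y : ℝ, IntervalIntegrable (fun t => f (Int.fract t)) volume x y)
    (a b : ℕ → ℝ) (hpart : isPiePartition k s a b)
    (hpos : ∀ j, j < k → 0 < pieVal f (a j) (b j))
    (x : ℝ) (hzero : pieVal f x (x + 1 / (2 * (k : ℝ))) = 0) :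
    ∃ a' b' : ℕ → ℝ,
      x + 1 / (2 * (k : ℝ)) ≤ a' 0 ∧
      (∀ j, j < k → a' j ≤ b' j) ∧
      (∀ j, j + 1 < k → b' j + s ≤ a' (j + 1)) ∧
      b' (k - 1) ≤ x + 1 ∧
      (∀ j, j < k → 0 < pieVal f (a' j) (b' j)) := by
  have hper : Function.Periodic (fun t => f (Int.fract t)) 1 := fun t => by simp
  obtain ⟨a', b', ⟨h₁, h₂, h₃, h₄⟩, h₅⟩ := exists_isCakePartition (fun t => hf0 _) hfi hper
    (by omega) hs.le hpart hpos (le_add_of_nonneg_right (by positivity)) hzero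
  exact ⟨a', b', h₁, h₂, h₃, h₄, h₅⟩

/-- If the pie admits an `s`-separated partition into `k` arcs of strictly positive value, and
some arc `[x, x + 1/(2k)]` of length `1/(2k)` has value `0`, then the cake obtained by
removing that arc from the pie admits an `s`-separated partition into `k` intervals of
strictly positive value. -/
theorem stmt_18 (k : ℕ) (hk : 2 ≤ k) (s : ℝ) (hs : 0 < s) (hs' : s ≤ 1 / (2 * (k : ℝ)))
    (f : ℝ → ℝ) (hf0 : ∀ t, 0 ≤ f t)
    (hfi : ∀ x y : ℝ, IntervalIntegrable (fun t => f (Int.fract t)) volume x y)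
    (a b : ℕ → ℝ) (hpart : isPiePartition k s a b)
    (hpos : ∀ j, j < k → 0 < pieVal f (a j) (b j))
    (x : ℝ) (hzero : pieVal f x (x + 1 / (2 * (k : ℝ))) = 0) :
    ∃ a' b' : ℕ → ℝ,
      x + 1 / (2 * (k : ℝ)) ≤ a' 0 ∧
      (∀ j, j < k → a' j ≤ b' j) ∧
      (∀ j, j + 1 < k → b' j + s ≤ a' (j + 1)) ∧
      b' (k - 1) ≤ x + 1 ∧
      (∀ j, j < k → 0 < pieVal f (a' j) (b' j)) :=
  stmt_18_general k hk s hs f hf0 hfi a b hpart hpos x hzero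
end
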